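/- arXiv:2508.13865 — 3 statements merged into one kernel-verified Lean document; each statement's English description precedes it below -/
import Mathlib

section
/- Let π ∈ Π(p,k) and σ ∈ S_k. A pair (A,A') ∈ V×V lies in the Zariski closure of (P_π × P_{σ(π)})·C_{π,σ} if and only if A ∈ V_π, A' ∈ V_{σ(π)}, and for every i = 1,…,k the pair (B_{i,i}, B'_{σ(i),σ(i)}) of diagonal blocks lies in the Zariski closure, inside (M_{p_i}(ℂ))^n × (M_{p_i}(ℂ))^n, of the graph {(C, h·C) : C ∈ (M_{p_i}(ℂ))^n, h ∈ GL_{p_i}(ℂ)} of the simultaneous-conjugation action of GL_{p_i}(ℂ) on (M_{p_i}(ℂ))^n. -/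
open Matrix MvPolynomial

/-- The space of `n`-tuples of `q × q` complex matrices (`n`-matrices). -/
abbrev MatT (n q : ℕ) : Type := Fin n → Matrix (Fin q) (Fin q) ℂ

/-- Index type for the coordinates on `MatT n q`. -/
abbrev Idx (n q : ℕ) : Type := Fin n × Fin q × Fin q

/-- Coordinates of an `n`-matrix. -/
def coordsV {n q : ℕ} (A : MatT n q) : Idx n q → ℂ := fun x => A x.1 x.2.1 x.2.2

/-- Coordinates on the product `MatT n q × MatT n q`. -/
def coordsVV {n q : ℕ} (AA : MatT n q × MatT n q) : (Idx n q ⊕ Idx n q) → ℂ :=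
  Sum.elim (coordsV AA.1) (coordsV AA.2)

/-- The Zariski topology on the affine space `ι → ℂ`: the topology generated by the
complements of zero loci of polynomials (its closed sets are the common zero loci of
arbitrary collections of polynomials). -/
def zariskiOn (ι : Type) : TopologicalSpace (ι → ℂ) :=
  TopologicalSpace.generateFrom
    {U | ∃ P : MvPolynomial ι ℂ, U = {x | MvPolynomial.eval x P ≠ 0}}

/-- The Zariski topology on `MatT n q`, transported along coordinates. -/
noncomputable def topV (n q : ℕ) : TopologicalSpace (MatT n q) :=
  TopologicalSpace.induced coordsV (zariskiOn (Idx n q))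

/-- The Zariski topology on `MatT n q × MatT n q`. -/
noncomputable def topVV (n q : ℕ) : TopologicalSpace (MatT n q × MatT n q) :=
  TopologicalSpace.induced coordsVV (zariskiOn (Idx n q ⊕ Idx n q))

/-- Zariski closure in `MatT n q`. -/
noncomputable def zClosureV {n q : ℕ} (s : Set (MatT n q)) : Set (MatT n q) :=
  @closure _ (topV n q) s

/-- Zariski closure in `MatT n q × MatT n q`. -/
noncomputable def zClosureVV {n q : ℕ} (s : Set (MatT n q × MatT n q)) :
    Set (MatT n q × MatT n q) :=
  @closure _ (topVV n q) s

/-- Zariski-closedness in `MatT n q`. -/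
def zIsClosedV {n q : ℕ} (s : Set (MatT n q)) : Prop := @IsClosed _ (topV n q) s

/-- Zariski-closedness in `MatT n q × MatT n q`. -/
def zIsClosedVV {n q : ℕ} (s : Set (MatT n q × MatT n q)) : Prop := @IsClosed _ (topVV n q) s

/-- Krull dimension of a subset of `MatT n q` (subspace Zariski topology). -/
noncomputable def dimV {n q : ℕ} (s : Set (MatT n q)) : WithBot ℕ∞ :=
  @topologicalKrullDim s (TopologicalSpace.induced Subtype.val (topV n q))

/-- Krull dimension of a subset of `MatT n q × MatT n q` (subspace Zariski topology). -/
noncomputable def dimVV {n q : ℕ} (s : Set (MatT n q × MatT n q)) : WithBot ℕ∞ :=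
  @topologicalKrullDim s (TopologicalSpace.induced Subtype.val (topVV n q))

/-- The subdimension of a topological space: the infimum of the dimensions of its
irreducible components. -/
noncomputable def sdimAux (X : Type*) [TopologicalSpace X] : WithBot ℕ∞ :=
  ⨅ C ∈ irreducibleComponents X, topologicalKrullDim C

/-- The subdimension of a subset of `MatT n q × MatT n q`: the minimum of the dimensions
of its irreducible components, in the subspace Zariski topology. -/
noncomputable def sdimVV {n q : ℕ} (s : Set (MatT n q × MatT n q)) : WithBot ℕ∞ :=
  @sdimAux s (TopologicalSpace.induced Subtype.val (topVV n q))

/-- Simultaneous conjugation action of `GL_q(ℂ)` on `MatT n q`. -/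
noncomputable def gconj {n q : ℕ} (g : Matrix.GeneralLinearGroup (Fin q) ℂ) (A : MatT n q) :
    MatT n q :=
  fun m => (g : Matrix (Fin q) (Fin q) ℂ) * A m *
    ((g⁻¹ : Matrix.GeneralLinearGroup (Fin q) ℂ) : Matrix (Fin q) (Fin q) ℂ)

/-- `f : MatT n q → ℂ` is a polynomial function. -/
def IsPolyFun {n q : ℕ} (f : MatT n q → ℂ) : Prop :=
  ∃ P : MvPolynomial (Idx n q) ℂ, ∀ A, f A = MvPolynomial.eval (coordsV A) P

/-- Invariance under simultaneous conjugation. -/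
def IsConjInvariant (n q : ℕ) (f : MatT n q → ℂ) : Prop :=
  ∀ (g : Matrix.GeneralLinearGroup (Fin q) ℂ) (A : MatT n q), f (gconj g A) = f A

/-- `S` is a separating set for `ℂ[V]^G`, `G = GL_q(ℂ)` acting by simultaneous conjugation. -/
def IsSeparatingSet (n q : ℕ) (S : Set (MatT n q → ℂ)) : Prop :=
  (∀ f ∈ S, IsPolyFun f ∧ IsConjInvariant n q f) ∧
  ∀ v w : MatT n q, (∀ f ∈ S, f v = f w) →
    ∀ f : MatT n q → ℂ, IsPolyFun f → IsConjInvariant n q f → f v = f w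

/-- The separating variety for `GL_q(ℂ)` acting on `MatT n q` by simultaneous conjugation. -/
def SepVar (n q : ℕ) : Set (MatT n q × MatT n q) :=
  {vw | ∀ f : MatT n q → ℂ, IsPolyFun f → IsConjInvariant n q f → f vw.1 = f vw.2}

/-- `q : Fin k → ℕ` is an ordered partition of `p` into `k` (nonzero) parts. -/
def IsOrderedPartition {k : ℕ} (p : ℕ) (q : Fin k → ℕ) : Prop :=
  (∀ i, 0 < q i) ∧ ∑ i, q i = p

/-- Offset of the `i`-th block of the partition `q`. -/
def off {k : ℕ} (q : Fin k → ℕ) (i : Fin k) : ℕ :=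
  ∑ j : Fin k, if j < i then q j else 0

/-- The `(a,b)` entry of the `(i,j)`-th `q`-block of the `n`-matrix `A`
(junk value `0` out of range). -/
def blockEntry {n p k : ℕ} (q : Fin k → ℕ) (A : MatT n p) (m : Fin n) (i j : Fin k)
    (a b : ℕ) : ℂ :=
  if h : off q i + a < p ∧ off q j + b < p
  then A m ⟨off q i + a, h.1⟩ ⟨off q j + b, h.2⟩ else 0

/-- The `(i,j)`-th `q`-block of `A`, realized as an `n`-tuple of `d × e` matrices. -/
def blockAt {n p k : ℕ} (q : Fin k → ℕ) (A : MatT n p) (i j : Fin k) (d e : ℕ) :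
    Fin n → Matrix (Fin d) (Fin e) ℂ :=
  fun m => Matrix.of fun a b => blockEntry q A m i j (a : ℕ) (b : ℕ)

/-- `V_π`: the subspace of `π`-block upper triangular `n`-matrices. -/
def VPi (n p : ℕ) {k : ℕ} (q : Fin k → ℕ) : Set (MatT n p) :=
  {A | ∀ (m : Fin n) (i j : Fin k), j < i → ∀ a b : ℕ, a < q i → b < q j →
    blockEntry q A m i j a b = 0}

/-- The partition `σ(π)`: the parts of `q` rearranged by `σ`, so that the part of
size `q i` is placed in position `σ i`. -/
def permutePart {k : ℕ} (σ : Equiv.Perm (Fin k)) (q : Fin k → ℕ) : Fin k → ℕ :=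
  fun j => q (σ.symm j)

/-- The set `C_{π,σ}` of pairs `(A, A')` with `A ∈ V_π`, `A' ∈ V_{σ(π)}`, and
`B_{i,i} = B'_{σ(i),σ(i)}` for all `i`. -/
def CSet (n p : ℕ) {k : ℕ} (q : Fin k → ℕ) (σ : Equiv.Perm (Fin k)) :
    Set (MatT n p × MatT n p) :=
  {AA | AA.1 ∈ VPi n p q ∧ AA.2 ∈ VPi n p (permutePart σ q) ∧
    ∀ (m : Fin n) (i : Fin k) (a b : ℕ), a < q i → b < q i →
      blockEntry q AA.1 m i i a b = blockEntry (permutePart σ q) AA.2 m (σ i) (σ i) a b}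

/-- The orbit set `G·s` of a subset `s ⊆ MatT n p`. -/
def GOrbit (n p : ℕ) (s : Set (MatT n p)) : Set (MatT n p) :=
  {x | ∃ (g : Matrix.GeneralLinearGroup (Fin p) ℂ) (A : MatT n p), A ∈ s ∧ x = gconj g A}

/-- The orbit set `G²·s` of a subset `s ⊆ MatT n p × MatT n p`. -/
def G2Orbit {n p : ℕ} (s : Set (MatT n p × MatT n p)) : Set (MatT n p × MatT n p) :=
  {x | ∃ (g g' : Matrix.GeneralLinearGroup (Fin p) ℂ) (AA : MatT n p × MatT n p),
    AA ∈ s ∧ x = (gconj g AA.1, gconj g' AA.2)}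

/-- The graph `Γ = {(A, g·A)}` of the conjugation action. -/
def graphG (n q : ℕ) : Set (MatT n q × MatT n q) :=
  {x | ∃ (A : MatT n q) (g : Matrix.GeneralLinearGroup (Fin q) ℂ), x = (A, gconj g A)}

/-- Entry of a `q`-block of a single matrix (junk value `0` out of range). -/
def blockEntryM {p k : ℕ} (q : Fin k → ℕ) (M : Matrix (Fin p) (Fin p) ℂ) (i j : Fin k)
    (a b : ℕ) : ℂ :=
  if h : off q i + a < p ∧ off q j + b < p
  then M ⟨off q i + a, h.1⟩ ⟨off q j + b, h.2⟩ else 0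

/-- The parabolic subgroup `P_π` of `π`-block upper triangular invertible matrices. -/
def Parab {p k : ℕ} (q : Fin k → ℕ) : Set (Matrix.GeneralLinearGroup (Fin p) ℂ) :=
  {g | ∀ (i j : Fin k), j < i → ∀ a b : ℕ, a < q i → b < q j →
    blockEntryM q (g : Matrix (Fin p) (Fin p) ℂ) i j a b = 0}

/-- The orbit set `(P_π × P_{σ(π)})·C_{π,σ}`. -/
def P2Orbit (n p : ℕ) {k : ℕ} (q : Fin k → ℕ) (σ : Equiv.Perm (Fin k)) :
    Set (MatT n p × MatT n p) :=
  {x | ∃ g ∈ Parab q, ∃ g' ∈ Parab (permutePart σ q), ∃ AA ∈ CSet n p q σ,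
    x = (gconj g AA.1, gconj g' AA.2)}

/-- One merge step of ordered partitions: the second is obtained from the first by
merging two adjacent parts. -/
def IsMergeStep : (Σ k : ℕ, Fin k → ℕ) → (Σ k : ℕ, Fin k → ℕ) → Prop := fun a b =>
  ∃ (k : ℕ) (q : Fin (k + 1) → ℕ) (q' : Fin k → ℕ) (j : Fin k),
    a = ⟨k + 1, q⟩ ∧ b = ⟨k, q'⟩ ∧
    (∀ i : Fin k, (i : ℕ) < (j : ℕ) → q' i = q i.castSucc) ∧
    q' j = q j.castSucc + q j.succ ∧
    (∀ i : Fin k, (j : ℕ) < (i : ℕ) → q' i = q i.succ)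

/-- The refinement order on ordered partitions: `π ≤ π̂` iff `π̂` is obtained from `π`
by repeatedly merging adjacent parts. -/
def PartLE (a b : Σ k : ℕ, Fin k → ℕ) : Prop := Relation.ReflTransGen IsMergeStep a b

/-- An `n`-matrix is simple if no nonzero proper subspace of `ℂ^q` is invariant under
all of its components. -/
def IsSimpleTuple {n q : ℕ} (B : MatT n q) : Prop :=
  ∀ W : Submodule ℂ (Fin q → ℂ),
    (∀ (m : Fin n) (v : Fin q → ℂ), v ∈ W → (B m).mulVec v ∈ W) → W = ⊥ ∨ W = ⊤

/-- Transport an `n`-matrix along an equality of sizes. -/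
def castTuple {n a b : ℕ} (h : a = b) (B : MatT n a) : MatT n b :=
  fun m => Matrix.reindex (finCongr h) (finCongr h) (B m)

/-- Two `n`-matrices (of possibly different sizes) are isomorphic if they have the same
size and are simultaneously conjugate. -/
def TupleIso {n a b : ℕ} (B : MatT n a) (B' : MatT n b) : Prop :=
  ∃ (h : a = b) (g : Matrix.GeneralLinearGroup (Fin b) ℂ), gconj g (castTuple h B) = B'

/-- An `n`-matrix is decomposable if `ℂ^q` is a direct sum of two nonzero subspaces,
each invariant under all of its components. -/
def IsDecomposableTuple {n q : ℕ} (B : MatT n q) : Prop :=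
  ∃ W W' : Submodule ℂ (Fin q → ℂ), W ≠ ⊥ ∧ W' ≠ ⊥ ∧ IsCompl W W' ∧
    (∀ (m : Fin n) (v : Fin q → ℂ), v ∈ W → (B m).mulVec v ∈ W) ∧
    (∀ (m : Fin n) (v : Fin q → ℂ), v ∈ W' → (B m).mulVec v ∈ W')

/-- The `d × d` principal submatrix of `A` starting at row/column `o`
(junk value `0` out of range). -/
def subSquare {n p : ℕ} (A : MatT n p) (o d : ℕ) : MatT n d :=
  fun m => Matrix.of fun a b : Fin d =>
    if h : o + (a : ℕ) < p ∧ o + (b : ℕ) < p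
    then A m ⟨o + (a : ℕ), h.1⟩ ⟨o + (b : ℕ), h.2⟩ else 0

/-- `A ∈ V_π` is maximally general for `π`: its diagonal `π`-blocks are simple and
pairwise non-isomorphic, and each pair of consecutive diagonal blocks together with the
block between them forms an indecomposable `n`-matrix. -/
def MaxGeneral (n p : ℕ) {k : ℕ} (q : Fin k → ℕ) (A : MatT n p) : Prop :=
  A ∈ VPi n p q ∧
  (∀ i : Fin k, IsSimpleTuple (blockAt q A i i (q i) (q i))) ∧
  (∀ i j : Fin k, i ≠ j →
    ¬ TupleIso (blockAt q A i i (q i) (q i)) (blockAt q A j j (q j) (q j))) ∧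
  (∀ (i : Fin k) (h : (i : ℕ) + 1 < k),
    ¬ IsDecomposableTuple (subSquare A (off q i) (q i + q ⟨(i : ℕ) + 1, h⟩)))

/-- `σ` is a partial reversal: in one-line notation it contains a substring `[l+1, l]`. -/
def IsPartialReversal {k : ℕ} (σ : Equiv.Perm (Fin k)) : Prop :=
  ∃ (l : ℕ) (h1 : l + 1 < k),
    ((σ ⟨l + 1, h1⟩ : Fin k) : ℕ) + 1 = ((σ ⟨l, Nat.lt_of_succ_lt h1⟩ : Fin k) : ℕ)

/-- The preorder `⪯` on pairs `(π,σ)`: containment of the Zariski closures of the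
corresponding orbit sets `G²·C_{π,σ}`. -/
def PairLE (n p : ℕ) {k k' : ℕ} (q : Fin k → ℕ) (σ : Equiv.Perm (Fin k))
    (q' : Fin k' → ℕ) (σ' : Equiv.Perm (Fin k')) : Prop :=
  zClosureVV (G2Orbit (CSet n p q σ)) ⊆ zClosureVV (G2Orbit (CSet n p q' σ'))

/-- The graph of the action of the diagonal torus `T ≤ GL_p(ℂ)` on `MatT n p`. -/
def graphT (n p : ℕ) : Set (MatT n p × MatT n p) :=
  {x | ∃ (A : MatT n p) (t : Matrix.GeneralLinearGroup (Fin p) ℂ),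
    (∀ i j : Fin p, i ≠ j → (t : Matrix (Fin p) (Fin p) ℂ) i j = 0) ∧ x = (A, gconj t A)}

/-- The action of `H = SL_p(ℂ) × SL_p(ℂ)` on `MatT n p` by `(h₁,h₂)·A = h₁ A h₂⁻¹`. -/
noncomputable def hAct {n q : ℕ}
    (h : Matrix.SpecialLinearGroup (Fin q) ℂ × Matrix.SpecialLinearGroup (Fin q) ℂ)
    (A : MatT n q) : MatT n q :=
  fun m => (h.1 : Matrix (Fin q) (Fin q) ℂ) * A m *
    ((h.2⁻¹ : Matrix.SpecialLinearGroup (Fin q) ℂ) : Matrix (Fin q) (Fin q) ℂ)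

/-- Invariance under the `SL_p(ℂ) × SL_p(ℂ)` action (matrix semi-invariants). -/
def IsSemiInvariant (n q : ℕ) (f : MatT n q → ℂ) : Prop :=
  ∀ (h : Matrix.SpecialLinearGroup (Fin q) ℂ × Matrix.SpecialLinearGroup (Fin q) ℂ)
    (A : MatT n q), f (hAct h A) = f A

/-- `S` is a separating set for the algebra of `p × p` matrix semi-invariants. -/
def IsSemiSepSet (n q : ℕ) (S : Set (MatT n q → ℂ)) : Prop :=
  (∀ f ∈ S, IsPolyFun f ∧ IsSemiInvariant n q f) ∧
  ∀ v w : MatT n q, (∀ f ∈ S, f v = f w) →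
    ∀ f : MatT n q → ℂ, IsPolyFun f → IsSemiInvariant n q f → f v = f w

section Zar
open TopologicalSpace

lemma zar_isClosed_vanish {ι : Type} (P : MvPolynomial ι ℂ) :
    @IsClosed _ (zariskiOn ι) {x | MvPolynomial.eval x P = 0} := by
  have h : @IsOpen _ (zariskiOn ι) {x | MvPolynomial.eval x P ≠ 0} :=
    TopologicalSpace.GenerateOpen.basic _ ⟨P, rfl⟩
  exact @IsClosed.mk _ (zariskiOn ι) _ h

lemma zar_open_witness {ι : Type} {U : Set (ι → ℂ)}
    (hU : @IsOpen _ (zariskiOn ι) U) :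
    ∀ x ∈ U, ∃ P : MvPolynomial ι ℂ, MvPolynomial.eval x P ≠ 0 ∧
      ∀ y, MvPolynomial.eval y P ≠ 0 → y ∈ U := by
  induction hU with
  | basic u hu =>
    obtain ⟨P, rfl⟩ := hu
    exact fun x hx => ⟨P, hx, fun y hy => hy⟩
  | univ => exact fun x _ => ⟨1, by simp, fun y _ => trivial⟩
  | inter u v _ _ ihu ihv =>
    intro x hx
    obtain ⟨P, hP1, hP2⟩ := ihu x hx.1
    obtain ⟨Q, hQ1, hQ2⟩ := ihv x hx.2
    refine ⟨P * Q, ?_, fun y hy => ?_⟩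
    · rw [_root_.map_mul]; exact mul_ne_zero hP1 hQ1
    · rw [_root_.map_mul] at hy
      exact ⟨hP2 y (left_ne_zero_of_mul hy), hQ2 y (right_ne_zero_of_mul hy)⟩
  | sUnion S _ ih =>
    rintro x ⟨u, hu, hx⟩
    obtain ⟨P, hP1, hP2⟩ := ih u hu x hx
    exact ⟨P, hP1, fun y hy => ⟨u, hu, hP2 y hy⟩⟩

lemma mem_zclosure_iff {ι : Type} (S : Set (ι → ℂ)) (x : ι → ℂ) :
    x ∈ @closure _ (zariskiOn ι) S ↔
      ∀ P : MvPolynomial ι ℂ, (∀ y ∈ S, MvPolynomial.eval y P = 0) →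
        MvPolynomial.eval x P = 0 := by
  letI := zariskiOn ι
  constructor
  · intro hx P hP
    by_contra hne
    rcases (mem_closure_iff.1 hx) {y | MvPolynomial.eval y P ≠ 0}
      (TopologicalSpace.GenerateOpen.basic _ ⟨P, rfl⟩) hne with ⟨y, hy1, hy2⟩
    exact hy1 (hP y hy2)
  · intro h
    by_contra hx
    obtain ⟨P, hP1, hP2⟩ := zar_open_witness (isOpen_compl_iff.2 isClosed_closure) x hx
    have hvan : ∀ y ∈ S, MvPolynomial.eval y P = 0 := by
      intro y hy
      by_contra hne
      exact (hP2 y hne) (subset_closure hy)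
    exact hP1 (h P hvan)

lemma mem_zClosureVV_iff {n q : ℕ} (S : Set (MatT n q × MatT n q)) (AA : MatT n q × MatT n q) :
    AA ∈ zClosureVV S ↔ ∀ P : MvPolynomial (Idx n q ⊕ Idx n q) ℂ,
      (∀ y ∈ S, MvPolynomial.eval (coordsVV y) P = 0) →
        MvPolynomial.eval (coordsVV AA) P = 0 := by
  rw [zClosureVV, topVV]
  rw [show (AA ∈ @closure _ (TopologicalSpace.induced coordsVV (zariskiOn (Idx n q ⊕ Idx n q))) S) ↔
      coordsVV AA ∈ @closure _ (zariskiOn (Idx n q ⊕ Idx n q)) (coordsVV '' S) from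
    @closure_induced _ _ (zariskiOn (Idx n q ⊕ Idx n q)) coordsVV AA S, mem_zclosure_iff]
  constructor
  · intro h P hP
    exact h P (by rintro y ⟨z, hz, rfl⟩; exact hP z hz)
  · intro h P hP
    exact h P (fun z hz => hP _ ⟨z, hz, rfl⟩)

end Zar
section PolyComp

/-- Composition with a coordinatewise-polynomial map preserves polynomiality. -/
lemma vanish_comp {ι κ : Type} (F : (ι → ℂ) → (κ → ℂ))
    (Q : κ → MvPolynomial ι ℂ) (hF : ∀ x j, F x j = MvPolynomial.eval x (Q j))
    (P : MvPolynomial κ ℂ) :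
    ∀ x, MvPolynomial.eval (F x) P = MvPolynomial.eval x (MvPolynomial.bind₁ Q P) := by
  intro x
  have h : MvPolynomial.aeval (R := ℂ) x (MvPolynomial.bind₁ Q P)
      = MvPolynomial.aeval (fun j => MvPolynomial.aeval (R := ℂ) x (Q j)) P :=
    MvPolynomial.aeval_bind₁ x Q P
  simp only [MvPolynomial.aeval_def, MvPolynomial.eval₂_eta] at h
  rw [show F x = fun j => MvPolynomial.eval x (Q j) from funext (hF x)]
  exact h.symm

end PolyComp

section Partition

variable {p k : ℕ} {q : Fin k → ℕ}

lemma off_eq_sum_filter (i : Fin k) :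
    off q i = ∑ j ∈ Finset.univ.filter (· < i), q j := by
  rw [off, Finset.sum_filter]

lemma off_add_le (hs : ∑ j, q j = p) (i : Fin k) : off q i + q i ≤ p := by
  rw [off_eq_sum_filter]
  have hi : i ∉ Finset.univ.filter (· < i) := by simp
  have : ∑ j ∈ Finset.univ.filter (· < i), q j + q i
      = ∑ j ∈ insert i (Finset.univ.filter (· < i)), q j := by
    rw [Finset.sum_insert hi, add_comm]
  rw [this, ← hs]
  exact Finset.sum_le_sum_of_subset (by intro x _; simp)

lemma off_add_lt (hs : ∑ j, q j = p) (i : Fin k) {a : ℕ} (ha : a < q i) :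
    off q i + a < p :=
  lt_of_lt_of_le (by omega) (off_add_le hs i)

lemma off_le_off_of_lt {i j : Fin k} (hij : i < j) : off q i + q i ≤ off q j := by
  rw [off_eq_sum_filter, off_eq_sum_filter]
  have hi : i ∉ Finset.univ.filter (· < i) := by simp
  have : ∑ l ∈ Finset.univ.filter (· < i), q l + q i
      = ∑ l ∈ insert i (Finset.univ.filter (· < i)), q l := by
    rw [Finset.sum_insert hi, add_comm]
  rw [this]
  refine Finset.sum_le_sum_of_subset ?_
  intro x hx
  simp only [Finset.mem_insert, Finset.mem_filter, Finset.mem_univ, true_and] at hx ⊢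
  rcases hx with rfl | hx
  · exact hij
  · exact lt_trans hx hij

/-- The canonical embedding of block coordinates into `Fin p`. -/
def emb (hs : ∑ j, q j = p) (x : Σ i : Fin k, Fin (q i)) : Fin p :=
  ⟨off q x.1 + x.2, off_add_lt hs x.1 x.2.2⟩

lemma emb_injective (hs : ∑ j, q j = p) : Function.Injective (emb hs) := by
  rintro ⟨i, a⟩ ⟨j, b⟩ h
  simp only [emb, Fin.mk.injEq] at h
  have hij : i = j := by
    by_contra hne
    rcases lt_or_gt_of_ne hne with hlt | hlt
    · have := off_le_off_of_lt (q := q) hlt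
      have := a.2
      omega
    · have := off_le_off_of_lt (q := q) hlt
      have := b.2
      omega
  subst hij
  have : (a : ℕ) = b := by omega
  exact Sigma.ext rfl (heq_of_eq (Fin.ext this))

lemma emb_bijective (hs : ∑ j, q j = p) : Function.Bijective (emb hs) := by
  rw [Fintype.bijective_iff_injective_and_card]
  refine ⟨emb_injective hs, ?_⟩
  simp [Fintype.card_sigma, hs]

/-- The block-coordinate equivalence. -/
noncomputable def embE (hs : ∑ j, q j = p) : (Σ i : Fin k, Fin (q i)) ≃ Fin p :=
  Equiv.ofBijective _ (emb_bijective hs)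

@[simp] lemma embE_apply (hs : ∑ j, q j = p) (x : Σ i : Fin k, Fin (q i)) :
    embE hs x = emb hs x := rfl

end Partition
section Blocks

variable {n p k : ℕ} {q : Fin k → ℕ}

/-- View a `p × p` matrix as a matrix indexed by block coordinates. -/
noncomputable def tm (hs : ∑ j, q j = p) (M : Matrix (Fin p) (Fin p) ℂ) :
    Matrix (Σ i : Fin k, Fin (q i)) (Σ i : Fin k, Fin (q i)) ℂ :=
  M.submatrix (embE hs) (embE hs)

lemma tm_apply (hs : ∑ j, q j = p) (M : Matrix (Fin p) (Fin p) ℂ)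
    (x y : Σ i : Fin k, Fin (q i)) : tm hs M x y = M (embE hs x) (embE hs y) := rfl

lemma tm_mul (hs : ∑ j, q j = p) (M N : Matrix (Fin p) (Fin p) ℂ) :
    tm hs (M * N) = tm hs M * tm hs N :=
  (Matrix.submatrix_mul_equiv M N _ (embE hs) _).symm

lemma tm_one (hs : ∑ j, q j = p) : tm hs (1 : Matrix (Fin p) (Fin p) ℂ) = 1 :=
  Matrix.submatrix_one_equiv (embE hs)

lemma blockEntry_eq (hs : ∑ j, q j = p) (A : MatT n p) (m : Fin n) {i j : Fin k} {a b : ℕ}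
    (ha : a < q i) (hb : b < q j) :
    blockEntry q A m i j a b = tm hs (A m) ⟨i, ⟨a, ha⟩⟩ ⟨j, ⟨b, hb⟩⟩ := by
  rw [blockEntry, dif_pos ⟨off_add_lt hs i ha, off_add_lt hs j hb⟩]
  rfl

lemma blockEntryM_eq (hs : ∑ j, q j = p) (M : Matrix (Fin p) (Fin p) ℂ) {i j : Fin k}
    {a b : ℕ} (ha : a < q i) (hb : b < q j) :
    blockEntryM q M i j a b = tm hs M ⟨i, ⟨a, ha⟩⟩ ⟨j, ⟨b, hb⟩⟩ := by
  rw [blockEntryM, dif_pos ⟨off_add_lt hs i ha, off_add_lt hs j hb⟩]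
  rfl

lemma mem_VPi_iff (hs : ∑ j, q j = p) {A : MatT n p} :
    A ∈ VPi n p q ↔ ∀ m, (tm hs (A m)).BlockTriangular Sigma.fst := by
  constructor
  · rintro hA m ⟨i, a⟩ ⟨j, b⟩ hij
    have := hA m i j hij (a : ℕ) (b : ℕ) a.2 b.2
    rwa [blockEntry_eq hs A m a.2 b.2] at this
  · intro h m i j hij a b ha hb
    rw [blockEntry_eq hs A m ha hb]
    exact h m (hij : Sigma.fst (⟨j, ⟨b, hb⟩⟩ : Σ i : Fin k, Fin (q i)) < _)

lemma mem_Parab_iff (hs : ∑ j, q j = p) {g : Matrix.GeneralLinearGroup (Fin p) ℂ} :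
    g ∈ Parab q ↔ (tm hs (g : Matrix (Fin p) (Fin p) ℂ)).BlockTriangular Sigma.fst := by
  constructor
  · rintro hg ⟨i, a⟩ ⟨j, b⟩ hij
    have := hg i j hij (a : ℕ) (b : ℕ) a.2 b.2
    rwa [blockEntryM_eq hs _ a.2 b.2] at this
  · intro h i j hij a b ha hb
    rw [blockEntryM_eq hs _ ha hb]
    exact h (hij : Sigma.fst (⟨j, ⟨b, hb⟩⟩ : Σ i : Fin k, Fin (q i)) < _)

/-- The `(i,i)` diagonal block of a block-indexed matrix, cast to size `d`. -/
def dgd (X : Matrix (Σ i : Fin k, Fin (q i)) (Σ i : Fin k, Fin (q i)) ℂ) (i : Fin k)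
    (d : ℕ) (hd : q i = d) : Matrix (Fin d) (Fin d) ℂ :=
  Matrix.of fun a b => X ⟨i, finCongr hd.symm a⟩ ⟨i, finCongr hd.symm b⟩

lemma dgd_one (i : Fin k) (d : ℕ) (hd : q i = d) :
    dgd (1 : Matrix (Σ i : Fin k, Fin (q i)) (Σ i : Fin k, Fin (q i)) ℂ) i d hd = 1 := by
  ext a b
  by_cases hab : a = b
  · subst hab
    simp [dgd, Matrix.one_apply]
  · rw [Matrix.one_apply_ne hab]
    show (1 : Matrix (Σ i : Fin k, Fin (q i)) (Σ i : Fin k, Fin (q i)) ℂ) _ _ = 0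
    rw [Matrix.one_apply_ne]
    intro h
    apply hab
    have := (Sigma.mk.inj_iff.1 h).2
    have := eq_of_heq this
    exact Fin.ext (by simpa [finCongr] using congrArg Fin.val this)

lemma dgd_mul {X Y : Matrix (Σ i : Fin k, Fin (q i)) (Σ i : Fin k, Fin (q i)) ℂ}
    (hX : X.BlockTriangular Sigma.fst) (hY : Y.BlockTriangular Sigma.fst)
    (i : Fin k) (d : ℕ) (hd : q i = d) :
    dgd (X * Y) i d hd = dgd X i d hd * dgd Y i d hd := by
  ext a b
  show (X * Y) _ _ = _
  rw [Matrix.mul_apply, ← Finset.univ_sigma_univ, Finset.sum_sigma]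
  rw [Finset.sum_eq_single i]
  · rw [Matrix.mul_apply]
    refine (Fintype.sum_equiv (finCongr hd.symm) _ _ ?_).symm
    intro c
    rfl
  · intro j _ hji
    apply Finset.sum_eq_zero
    intro c _
    rcases lt_or_gt_of_ne hji with hlt | hlt
    · rw [hX (show Sigma.fst (⟨j, c⟩ : Σ i : Fin k, Fin (q i)) < _ from hlt), zero_mul]
    · rw [hY (show Sigma.fst _ < Sigma.fst (⟨j, c⟩ : Σ i : Fin k, Fin (q i)) from hlt), mul_zero]
  · intro h
    exact absurd (Finset.mem_univ i) h

end Blocks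
section ParabBlocks

variable {n p k : ℕ} {q : Fin k → ℕ}

lemma tm_coe_mul_inv (hs : ∑ j, q j = p) (g : Matrix.GeneralLinearGroup (Fin p) ℂ) :
    tm hs (g : Matrix (Fin p) (Fin p) ℂ) * tm hs ((g⁻¹ :
      Matrix.GeneralLinearGroup (Fin p) ℂ) : Matrix (Fin p) (Fin p) ℂ) = 1 := by
  rw [← tm_mul, ← Units.val_mul, mul_inv_cancel, Units.val_one, tm_one]

lemma tm_coe_inv_mul (hs : ∑ j, q j = p) (g : Matrix.GeneralLinearGroup (Fin p) ℂ) :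
    tm hs ((g⁻¹ : Matrix.GeneralLinearGroup (Fin p) ℂ) : Matrix (Fin p) (Fin p) ℂ) *
      tm hs (g : Matrix (Fin p) (Fin p) ℂ) = 1 := by
  rw [← tm_mul, ← Units.val_mul, inv_mul_cancel, Units.val_one, tm_one]

lemma parab_inv_mem (hs : ∑ j, q j = p) {g : Matrix.GeneralLinearGroup (Fin p) ℂ}
    (hg : g ∈ Parab q) : g⁻¹ ∈ Parab q := by
  rw [mem_Parab_iff hs] at hg ⊢
  have h1 := tm_coe_mul_inv hs g
  haveI : Invertible (tm hs (g : Matrix (Fin p) (Fin p) ℂ)) :=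
    invertibleOfRightInverse _ _ h1
  have h2 : tm hs ((g⁻¹ : Matrix.GeneralLinearGroup (Fin p) ℂ) : Matrix (Fin p) (Fin p) ℂ)
      = (tm hs (g : Matrix (Fin p) (Fin p) ℂ))⁻¹ := (Matrix.inv_eq_right_inv h1).symm
  rw [h2]
  exact Matrix.blockTriangular_inv_of_blockTriangular hg

/-- The `i`-th diagonal block of a parabolic element, as an invertible matrix of size `d`. -/
noncomputable def gBlkd (hs : ∑ j, q j = p) {g : Matrix.GeneralLinearGroup (Fin p) ℂ}
    (hg : g ∈ Parab q) (i : Fin k) (d : ℕ) (hd : q i = d) :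
    Matrix.GeneralLinearGroup (Fin d) ℂ where
  val := dgd (tm hs (g : Matrix (Fin p) (Fin p) ℂ)) i d hd
  inv := dgd (tm hs ((g⁻¹ : Matrix.GeneralLinearGroup (Fin p) ℂ) :
    Matrix (Fin p) (Fin p) ℂ)) i d hd
  val_inv := by
    rw [← dgd_mul ((mem_Parab_iff hs).1 hg) ((mem_Parab_iff hs).1 (parab_inv_mem hs hg)),
      tm_coe_mul_inv hs, dgd_one]
  inv_val := by
    rw [← dgd_mul ((mem_Parab_iff hs).1 (parab_inv_mem hs hg)) ((mem_Parab_iff hs).1 hg),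
      tm_coe_inv_mul hs, dgd_one]

@[simp] lemma gBlkd_coe (hs : ∑ j, q j = p) {g : Matrix.GeneralLinearGroup (Fin p) ℂ}
    (hg : g ∈ Parab q) (i : Fin k) (d : ℕ) (hd : q i = d) :
    ((gBlkd hs hg i d hd : Matrix.GeneralLinearGroup (Fin d) ℂ) : Matrix (Fin d) (Fin d) ℂ)
      = dgd (tm hs (g : Matrix (Fin p) (Fin p) ℂ)) i d hd := rfl

@[simp] lemma gBlkd_inv_coe (hs : ∑ j, q j = p) {g : Matrix.GeneralLinearGroup (Fin p) ℂ}
    (hg : g ∈ Parab q) (i : Fin k) (d : ℕ) (hd : q i = d) :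
    (((gBlkd hs hg i d hd)⁻¹ : Matrix.GeneralLinearGroup (Fin d) ℂ) :
      Matrix (Fin d) (Fin d) ℂ)
      = dgd (tm hs ((g⁻¹ : Matrix.GeneralLinearGroup (Fin p) ℂ) :
          Matrix (Fin p) (Fin p) ℂ)) i d hd := rfl

lemma gconj_mem_VPi (hs : ∑ j, q j = p) {g : Matrix.GeneralLinearGroup (Fin p) ℂ}
    {A : MatT n p} (hg : g ∈ Parab q) (hA : A ∈ VPi n p q) : gconj g A ∈ VPi n p q := by
  rw [mem_VPi_iff hs] at hA ⊢
  intro m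
  show (tm hs (_ * A m * _)).BlockTriangular Sigma.fst
  rw [tm_mul, tm_mul]
  exact (((mem_Parab_iff hs).1 hg).mul (hA m)).mul ((mem_Parab_iff hs).1 (parab_inv_mem hs hg))

lemma blockAt_eq (hs : ∑ j, q j = p) (A : MatT n p) (i : Fin k) (d : ℕ) (hd : q i = d) :
    blockAt q A i i d d = fun m => dgd (tm hs (A m)) i d hd := by
  funext m
  ext a b
  show blockEntry q A m i i (a : ℕ) (b : ℕ) = _
  rw [blockEntry_eq hs A m (show (a : ℕ) < q i from hd ▸ a.2) (show (b : ℕ) < q i from hd ▸ b.2)]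
  rfl

lemma blockAt_gconj (hs : ∑ j, q j = p) {g : Matrix.GeneralLinearGroup (Fin p) ℂ}
    {A : MatT n p} (hg : g ∈ Parab q) (hA : A ∈ VPi n p q) (i : Fin k) (d : ℕ)
    (hd : q i = d) :
    blockAt q (gconj g A) i i d d = gconj (gBlkd hs hg i d hd) (blockAt q A i i d d) := by
  rw [blockAt_eq hs _ i d hd, blockAt_eq hs A i d hd]
  funext m
  show dgd (tm hs (_ * A m * _)) i d hd = _
  rw [tm_mul, tm_mul,
    dgd_mul (((mem_Parab_iff hs).1 hg).mul (((mem_VPi_iff hs).1 hA) m))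
      ((mem_Parab_iff hs).1 (parab_inv_mem hs hg)),
    dgd_mul ((mem_Parab_iff hs).1 hg) (((mem_VPi_iff hs).1 hA) m)]
  rfl

lemma gconj_gconj {d : ℕ} {nn : ℕ} (g h : Matrix.GeneralLinearGroup (Fin d) ℂ)
    (A : MatT nn d) : gconj g (gconj h A) = gconj (g * h) A := by
  funext m
  show (g : Matrix (Fin d) (Fin d) ℂ) * ((h : Matrix (Fin d) (Fin d) ℂ) * A m * _) * _
      = ((g * h : Matrix.GeneralLinearGroup (Fin d) ℂ) : Matrix (Fin d) (Fin d) ℂ) * A m *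
        (((g * h)⁻¹ : Matrix.GeneralLinearGroup (Fin d) ℂ) : Matrix (Fin d) (Fin d) ℂ)
  rw [show ((g * h : Matrix.GeneralLinearGroup (Fin d) ℂ))⁻¹ = h⁻¹ * g⁻¹ from
    _root_.mul_inv_rev g h]
  simp only [Units.val_mul, Matrix.mul_assoc]

lemma gconj_one {d nn : ℕ} (A : MatT nn d) :
    gconj (1 : Matrix.GeneralLinearGroup (Fin d) ℂ) A = A := by
  funext m
  show (1 : Matrix.GeneralLinearGroup (Fin d) ℂ).val * A m * _ = A m
  simp

end ParabBlocks
section Repl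

variable {n p k : ℕ} {q : Fin k → ℕ}

lemma tm_inj (hs : ∑ j, q j = p) {M N : Matrix (Fin p) (Fin p) ℂ}
    (h : tm hs M = tm hs N) : M = N := by
  ext r c
  have := congrFun (congrFun h ((embE hs).symm r)) ((embE hs).symm c)
  simpa [tm_apply, Equiv.apply_symm_apply] using this

/-- Replace the `(i,i)`-th diagonal block of `x1` by `C`. -/
noncomputable def repl (hs : ∑ j, q j = p) (x1 : MatT n p) (i : Fin k) (d : ℕ)
    (hd : q i = d) (C : MatT n d) : MatT n p :=
  fun m => Matrix.of fun r c =>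
    if h : ((embE hs).symm r).1 = i ∧ ((embE hs).symm c).1 = i
    then C m (finCongr (show q ((embE hs).symm r).1 = d by rw [h.1, hd]) ((embE hs).symm r).2)
      (finCongr (show q ((embE hs).symm c).1 = d by rw [h.2, hd]) ((embE hs).symm c).2)
    else x1 m r c

lemma repl_entry_aux (hs : ∑ j, q j = p) (x1 : MatT n p) (i : Fin k) (d : ℕ)
    (hd : q i = d) (C : MatT n d) (m : Fin n) (x y : Σ i : Fin k, Fin (q i)) :
    ∀ (z w : Σ i : Fin k, Fin (q i)), z = x → w = y →
    (if h : z.1 = i ∧ w.1 = i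
      then C m (finCongr (show q z.1 = d by rw [h.1, hd]) z.2)
        (finCongr (show q w.1 = d by rw [h.2, hd]) w.2)
      else tm hs (x1 m) x y)
    = (if h : x.1 = i ∧ y.1 = i
      then C m (finCongr (show q x.1 = d by rw [h.1, hd]) x.2)
        (finCongr (show q y.1 = d by rw [h.2, hd]) y.2)
      else tm hs (x1 m) x y) := by
  rintro z w rfl rfl
  rfl

lemma tm_repl_apply (hs : ∑ j, q j = p) (x1 : MatT n p) (i : Fin k) (d : ℕ)
    (hd : q i = d) (C : MatT n d) (m : Fin n) (x y : Σ i : Fin k, Fin (q i)) :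
    tm hs (repl hs x1 i d hd C m) x y =
      if h : x.1 = i ∧ y.1 = i
      then C m (finCongr (show q x.1 = d by rw [h.1, hd]) x.2)
        (finCongr (show q y.1 = d by rw [h.2, hd]) y.2)
      else tm hs (x1 m) x y :=
  repl_entry_aux hs x1 i d hd C m x y _ _ (Equiv.symm_apply_apply _ x)
    (Equiv.symm_apply_apply _ y)

lemma repl_mem_VPi (hs : ∑ j, q j = p) {x1 : MatT n p} (hx : x1 ∈ VPi n p q)
    (i : Fin k) (d : ℕ) (hd : q i = d) (C : MatT n d) :
    repl hs x1 i d hd C ∈ VPi n p q := by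
  rw [mem_VPi_iff hs] at hx ⊢
  intro m x y hxy
  rw [tm_repl_apply]
  rw [dif_neg]
  · exact hx m hxy
  · rintro ⟨h1, h2⟩
    rw [h1, h2] at hxy
    exact lt_irrefl _ hxy

lemma blockAt_repl_self (hs : ∑ j, q j = p) (x1 : MatT n p) (i : Fin k) (d : ℕ)
    (hd : q i = d) (C : MatT n d) :
    blockAt q (repl hs x1 i d hd C) i i d d = C := by
  rw [blockAt_eq hs _ i d hd]
  funext m
  ext a b
  show tm hs (repl hs x1 i d hd C m) ⟨i, _⟩ ⟨i, _⟩ = C m a b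
  rw [tm_repl_apply, dif_pos ⟨rfl, rfl⟩]
  congr 1 <;> exact Fin.ext (by simp [finCongr])

lemma blockAt_repl_ne (hs : ∑ j, q j = p) (x1 : MatT n p) {i j : Fin k} (hij : j ≠ i)
    (d : ℕ) (hd : q i = d) (C : MatT n d) (e : ℕ) (he : q j = e) :
    blockAt q (repl hs x1 i d hd C) j j e e = blockAt q x1 j j e e := by
  rw [blockAt_eq hs _ j e he, blockAt_eq hs x1 j e he]
  funext m
  ext a b
  show tm hs (repl hs x1 i d hd C m) ⟨j, _⟩ ⟨j, _⟩ = _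
  rw [tm_repl_apply, dif_neg (by rintro ⟨h1, _⟩; exact hij h1)]
  rfl

lemma repl_blockAt_self (hs : ∑ j, q j = p) (x1 : MatT n p) (i : Fin k) (d : ℕ)
    (hd : q i = d) :
    repl hs x1 i d hd (blockAt q x1 i i d d) = x1 := by
  funext m
  apply tm_inj hs
  ext x y
  rw [tm_repl_apply]
  split
  · rename_i h
    obtain ⟨j, a⟩ := x
    obtain ⟨l, b⟩ := y
    obtain ⟨h1, h2⟩ := h
    dsimp only at h1 h2
    rw [blockAt_eq hs x1 i d hd]
    show tm hs (x1 m) _ _ = tm hs (x1 m) _ _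
    rw [tm_apply, tm_apply]
    have e1 : embE hs ⟨i, finCongr hd.symm (finCongr (show q j = d by rw [h1, hd]) a)⟩
        = embE hs ⟨j, a⟩ := by
      apply Fin.ext
      show off q i + _ = off q j + (a : ℕ)
      have hoff : off q j = off q i := by rw [h1]
      simp [finCongr, hoff]
    have e2 : embE hs ⟨i, finCongr hd.symm (finCongr (show q l = d by rw [h2, hd]) b)⟩
        = embE hs ⟨l, b⟩ := by
      apply Fin.ext
      show off q i + _ = off q l + (b : ℕ)
      have hoff : off q l = off q i := by rw [h2]
      simp [finCongr, hoff]
    rw [e1, e2]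
  · rfl

end Repl

section BDiag

variable {n p k : ℕ} {q : Fin k → ℕ}

/-- A block-diagonal invertible matrix built from invertible diagonal blocks. -/
noncomputable def bdiag (hs : ∑ j, q j = p)
    (w : ∀ j : Fin k, (Matrix (Fin (q j)) (Fin (q j)) ℂ)ˣ) :
    Matrix.GeneralLinearGroup (Fin p) ℂ where
  val := (Matrix.blockDiagonal' (fun j => ((w j : Matrix (Fin (q j)) (Fin (q j)) ℂ)))).submatrix
    (embE hs).symm (embE hs).symm
  inv := (Matrix.blockDiagonal' (fun j =>
    (((w j)⁻¹ : (Matrix (Fin (q j)) (Fin (q j)) ℂ)ˣ) : Matrix (Fin (q j)) (Fin (q j)) ℂ))).submatrix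
    (embE hs).symm (embE hs).symm
  val_inv := by
    rw [Matrix.submatrix_mul_equiv _ _ _ ((embE hs).symm) _, ← Matrix.blockDiagonal'_mul]
    have : (fun j => ((w j : Matrix (Fin (q j)) (Fin (q j)) ℂ)) *
        (((w j)⁻¹ : (Matrix (Fin (q j)) (Fin (q j)) ℂ)ˣ) : Matrix (Fin (q j)) (Fin (q j)) ℂ))
        = (1 : ∀ j : Fin k, Matrix (Fin (q j)) (Fin (q j)) ℂ) := by
      funext j
      exact Units.mul_inv _
    rw [this, Matrix.blockDiagonal'_one]
    exact Matrix.submatrix_one_equiv ((embE hs).symm)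
  inv_val := by
    rw [Matrix.submatrix_mul_equiv _ _ _ ((embE hs).symm) _, ← Matrix.blockDiagonal'_mul]
    have : (fun j => (((w j)⁻¹ : (Matrix (Fin (q j)) (Fin (q j)) ℂ)ˣ) :
        Matrix (Fin (q j)) (Fin (q j)) ℂ) * ((w j : Matrix (Fin (q j)) (Fin (q j)) ℂ)))
        = (1 : ∀ j : Fin k, Matrix (Fin (q j)) (Fin (q j)) ℂ) := by
      funext j
      exact Units.inv_mul _
    rw [this, Matrix.blockDiagonal'_one]
    exact Matrix.submatrix_one_equiv ((embE hs).symm)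

lemma tm_bdiag (hs : ∑ j, q j = p) (w : ∀ j : Fin k, (Matrix (Fin (q j)) (Fin (q j)) ℂ)ˣ) :
    tm hs ((bdiag hs w : Matrix.GeneralLinearGroup (Fin p) ℂ) : Matrix (Fin p) (Fin p) ℂ)
      = Matrix.blockDiagonal' (fun j => ((w j : Matrix (Fin (q j)) (Fin (q j)) ℂ))) := by
  show (_root_.Matrix.submatrix _ _ _).submatrix _ _ = _
  rw [Matrix.submatrix_submatrix]
  have h1 : (⇑(embE hs).symm ∘ ⇑(embE hs)) = id := by
    funext x; exact Equiv.symm_apply_apply _ x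
  rw [h1, Matrix.submatrix_id_id]

lemma tm_bdiag_inv (hs : ∑ j, q j = p) (w : ∀ j : Fin k, (Matrix (Fin (q j)) (Fin (q j)) ℂ)ˣ) :
    tm hs (((bdiag hs w)⁻¹ : Matrix.GeneralLinearGroup (Fin p) ℂ) : Matrix (Fin p) (Fin p) ℂ)
      = Matrix.blockDiagonal' (fun j =>
        (((w j)⁻¹ : (Matrix (Fin (q j)) (Fin (q j)) ℂ)ˣ) : Matrix (Fin (q j)) (Fin (q j)) ℂ)) := by
  show (_root_.Matrix.submatrix _ _ _).submatrix _ _ = _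
  rw [Matrix.submatrix_submatrix]
  have h1 : (⇑(embE hs).symm ∘ ⇑(embE hs)) = id := by
    funext x; exact Equiv.symm_apply_apply _ x
  rw [h1, Matrix.submatrix_id_id]

lemma bdiag_mem_Parab (hs : ∑ j, q j = p)
    (w : ∀ j : Fin k, (Matrix (Fin (q j)) (Fin (q j)) ℂ)ˣ) : bdiag hs w ∈ Parab q := by
  rw [mem_Parab_iff hs, tm_bdiag]
  intro x y hxy
  exact Matrix.blockDiagonal'_apply_ne _ _ _ (fun h => (lt_irrefl _ (h ▸ hxy)))

lemma bdiag_inv_mem_Parab (hs : ∑ j, q j = p)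
    (w : ∀ j : Fin k, (Matrix (Fin (q j)) (Fin (q j)) ℂ)ˣ) : (bdiag hs w)⁻¹ ∈ Parab q := by
  rw [mem_Parab_iff hs, tm_bdiag_inv]
  intro x y hxy
  exact Matrix.blockDiagonal'_apply_ne _ _ _ (fun h => (lt_irrefl _ (h ▸ hxy)))

end BDiag
section SetLemmas

variable {n p k : ℕ} {q : Fin k → ℕ}

lemma dgd_blockDiagonal' (f : ∀ j : Fin k, Matrix (Fin (q j)) (Fin (q j)) ℂ) (i : Fin k)
    (d : ℕ) (hd : q i = d) (a b : Fin d) :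
    dgd (Matrix.blockDiagonal' f) i d hd a b
      = f i (finCongr hd.symm a) (finCongr hd.symm b) :=
  Matrix.blockDiagonal'_apply_eq f i _ _

lemma one_mem_Parab (hs : ∑ j, q j = p) : (1 : Matrix.GeneralLinearGroup (Fin p) ℂ) ∈ Parab q := by
  rw [mem_Parab_iff hs]
  intro x y hxy
  show tm hs (1 : Matrix (Fin p) (Fin p) ℂ) x y = 0
  rw [tm_one]
  exact Matrix.one_apply_ne (fun h => lt_irrefl _ (h ▸ hxy))

lemma perm_partition (σ : Equiv.Perm (Fin k)) (hq : IsOrderedPartition p q) :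
    IsOrderedPartition p (permutePart σ q) := by
  refine ⟨fun j => hq.1 _, ?_⟩
  rw [show ∑ j, permutePart σ q j = ∑ j, q (σ.symm j) from rfl]
  rw [Equiv.sum_comp σ.symm q]
  exact hq.2

lemma permutePart_apply_perm (σ : Equiv.Perm (Fin k)) (i : Fin k) :
    permutePart σ q (σ i) = q i := by
  show q (σ.symm (σ i)) = q i
  rw [Equiv.symm_apply_apply]

lemma CSet_blockAt_eq {σ : Equiv.Perm (Fin k)} {AA : MatT n p × MatT n p}
    (h : AA ∈ CSet n p q σ) (i : Fin k) :
    blockAt q AA.1 i i (q i) (q i)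
      = blockAt (permutePart σ q) AA.2 (σ i) (σ i) (q i) (q i) := by
  funext m
  ext a b
  exact h.2.2 m i a b a.2 b.2

lemma mem_graphG_pair {nn d : ℕ} (B : MatT nn d) (h : Matrix.GeneralLinearGroup (Fin d) ℂ) :
    (B, gconj h B) ∈ graphG nn d := ⟨B, h, rfl⟩

/-- Every element of the parabolic orbit satisfies the three conditions, with the
diagonal blocks actually on the graph. -/
lemma P2Orbit_blocks (hq : IsOrderedPartition p q) (σ : Equiv.Perm (Fin k))
    {x : MatT n p × MatT n p} (hx : x ∈ P2Orbit n p q σ) :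
    x.1 ∈ VPi n p q ∧ x.2 ∈ VPi n p (permutePart σ q) ∧
    ∀ i : Fin k, (blockAt q x.1 i i (q i) (q i),
      blockAt (permutePart σ q) x.2 (σ i) (σ i) (q i) (q i)) ∈ graphG n (q i) := by
  obtain ⟨g, hg, g', hg', AA, hAA, hx⟩ := hx
  have hs : ∑ j, q j = p := hq.2
  have hs' : ∑ j, permutePart σ q j = p := (perm_partition σ hq).2
  subst hx
  refine ⟨gconj_mem_VPi hs hg hAA.1, gconj_mem_VPi hs' hg' hAA.2.1, fun i => ?_⟩
  have hd' : permutePart σ q (σ i) = q i := permutePart_apply_perm σ i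
  have e1 : blockAt q (gconj g AA.1) i i (q i) (q i)
      = gconj (gBlkd hs hg i (q i) rfl) (blockAt q AA.1 i i (q i) (q i)) :=
    blockAt_gconj hs hg hAA.1 i (q i) rfl
  have e2 : blockAt (permutePart σ q) (gconj g' AA.2) (σ i) (σ i) (q i) (q i)
      = gconj (gBlkd hs' hg' (σ i) (q i) hd')
          (blockAt (permutePart σ q) AA.2 (σ i) (σ i) (q i) (q i)) :=
    blockAt_gconj hs' hg' hAA.2.1 (σ i) (q i) hd'
  rw [e1, e2, ← CSet_blockAt_eq hAA i]
  set u := gBlkd hs hg i (q i) rfl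
  set v := gBlkd hs' hg' (σ i) (q i) hd'
  set B := blockAt q AA.1 i i (q i) (q i)
  refine ⟨gconj u B, v * u⁻¹, ?_⟩
  rw [gconj_gconj, inv_mul_cancel_right]

lemma hgl_cast_aux (hgl : ∀ i : Fin k, Matrix.GeneralLinearGroup (Fin (q i)) ℂ) (i : Fin k) :
    ∀ (t : Fin k), t = i → ∀ (a b : Fin (q i)) (a' b' : Fin (q t)),
      (a' : ℕ) = (a : ℕ) → (b' : ℕ) = (b : ℕ) →
      (((hgl t)⁻¹ : Matrix.GeneralLinearGroup (Fin (q t)) ℂ) : Matrix (Fin (q t)) (Fin (q t)) ℂ) a' b'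
        = (((hgl i)⁻¹ : Matrix.GeneralLinearGroup (Fin (q i)) ℂ) :
            Matrix (Fin (q i)) (Fin (q i)) ℂ) a b := by
  rintro t rfl a b a' b' ha hb
  rw [Fin.ext ha, Fin.ext hb]

/-- If all diagonal blocks are related by conjugation, the pair lies in the parabolic orbit. -/
lemma mem_P2Orbit_of_blocks (hq : IsOrderedPartition p q) (σ : Equiv.Perm (Fin k))
    {x : MatT n p × MatT n p} (h1 : x.1 ∈ VPi n p q)
    (h2 : x.2 ∈ VPi n p (permutePart σ q))
    (hgl : ∀ i : Fin k, Matrix.GeneralLinearGroup (Fin (q i)) ℂ)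
    (hb : ∀ i : Fin k, blockAt (permutePart σ q) x.2 (σ i) (σ i) (q i) (q i)
      = gconj (hgl i) (blockAt q x.1 i i (q i) (q i))) :
    x ∈ P2Orbit n p q σ := by
  have hs : ∑ j, q j = p := hq.2
  have hs' : ∑ j, permutePart σ q j = p := (perm_partition σ hq).2
  -- the block diagonal element of `P_{σ(π)}`
  set w : ∀ j : Fin k, (Matrix (Fin (permutePart σ q j)) (Fin (permutePart σ q j)) ℂ)ˣ :=
    fun j => hgl (σ.symm j) with hw
  set D := bdiag hs' w with hD
  have hDmem : D ∈ Parab (permutePart σ q) := bdiag_mem_Parab hs' w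
  have hDinvmem : D⁻¹ ∈ Parab (permutePart σ q) := bdiag_inv_mem_Parab hs' w
  refine ⟨1, one_mem_Parab hs, D, hDmem, (x.1, gconj D⁻¹ x.2), ⟨h1, gconj_mem_VPi hs' hDinvmem h2, ?_⟩, ?_⟩
  · -- diagonal blocks agree
    intro m i a b ha hb'
    have hd' : permutePart σ q (σ i) = q i := permutePart_apply_perm σ i
    have key : blockAt (permutePart σ q) (gconj D⁻¹ x.2) (σ i) (σ i) (q i) (q i)
        = blockAt q x.1 i i (q i) (q i) := by
      rw [blockAt_gconj hs' hDinvmem h2 (σ i) (q i) hd', hb i, gconj_gconj]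
      have hunit : gBlkd hs' hDinvmem (σ i) (q i) hd' = (hgl i)⁻¹ := by
        apply Units.ext
        show dgd (tm hs' ((D⁻¹ : Matrix.GeneralLinearGroup (Fin p) ℂ) :
          Matrix (Fin p) (Fin p) ℂ)) (σ i) (q i) hd' = _
        rw [show tm hs' ((D⁻¹ : Matrix.GeneralLinearGroup (Fin p) ℂ) :
            Matrix (Fin p) (Fin p) ℂ) = Matrix.blockDiagonal' (fun j =>
            (((w j)⁻¹ : (Matrix (Fin (permutePart σ q j)) (Fin (permutePart σ q j)) ℂ)ˣ) :
              Matrix (Fin (permutePart σ q j)) (Fin (permutePart σ q j)) ℂ)) from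
          tm_bdiag_inv hs' w]
        ext a' b'
        rw [dgd_blockDiagonal']
        exact hgl_cast_aux hgl i (σ.symm (σ i)) (Equiv.symm_apply_apply σ i) a' b' _ _
          (by simp [finCongr]) (by simp [finCongr])
      rw [hunit, inv_mul_cancel, gconj_one]
    have h3 := congrFun (congrFun (congrFun key m) ⟨a, ha⟩) ⟨b, hb'⟩
    exact h3.symm
  · -- x is recovered
    ext1
    · show x.1 = gconj 1 x.1
      rw [gconj_one]
    · show x.2 = gconj D (gconj D⁻¹ x.2)
      rw [gconj_gconj, mul_inv_cancel, gconj_one]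

end SetLemmas
theorem stmt5 (n p : ℕ) (hn : 2 ≤ n) (hp : 2 ≤ p) (k : ℕ) (q : Fin k → ℕ)
    (hq : IsOrderedPartition p q) (σ : Equiv.Perm (Fin k)) (AA : MatT n p × MatT n p) :
    AA ∈ zClosureVV (P2Orbit n p q σ) ↔
      AA.1 ∈ VPi n p q ∧ AA.2 ∈ VPi n p (permutePart σ q) ∧
      ∀ i : Fin k,
        (blockAt q AA.1 i i (q i) (q i),
          blockAt (permutePart σ q) AA.2 (σ i) (σ i) (q i) (q i)) ∈
          zClosureVV (graphG n (q i)) := by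
  have hs : ∑ j, q j = p := hq.2
  have hs' : ∑ j, permutePart σ q j = p := (perm_partition σ hq).2
  rw [mem_zClosureVV_iff]
  constructor
  · -- forward direction
    intro hAA
    refine ⟨?_, ?_, ?_⟩
    · -- AA.1 ∈ VPi
      intro m i j hij a b ha hb
      have hvan : ∀ y ∈ P2Orbit n p q σ, MvPolynomial.eval (coordsVV y)
          (MvPolynomial.X (Sum.inl (m, embE hs ⟨i, ⟨a, ha⟩⟩, embE hs ⟨j, ⟨b, hb⟩⟩))) = 0 := by
        intro y hy
        rw [MvPolynomial.eval_X]
        have h0 := (P2Orbit_blocks hq σ hy).1 m i j hij a b ha hb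
        rw [blockEntry_eq hs y.1 m ha hb] at h0
        exact h0
      have h1 := hAA _ hvan
      rw [MvPolynomial.eval_X] at h1
      rw [blockEntry_eq hs AA.1 m ha hb]
      exact h1
    · -- AA.2 ∈ VPi (permutePart σ q)
      intro m i j hij a b ha hb
      have hvan : ∀ y ∈ P2Orbit n p q σ, MvPolynomial.eval (coordsVV y)
          (MvPolynomial.X (Sum.inr (m, embE hs' ⟨i, ⟨a, ha⟩⟩, embE hs' ⟨j, ⟨b, hb⟩⟩))) = 0 := by
        intro y hy
        rw [MvPolynomial.eval_X]
        have h0 := (P2Orbit_blocks hq σ hy).2.1 m i j hij a b ha hb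
        rw [blockEntry_eq hs' y.2 m ha hb] at h0
        exact h0
      have h1 := hAA _ hvan
      rw [MvPolynomial.eval_X] at h1
      rw [blockEntry_eq hs' AA.2 m ha hb]
      exact h1
    · -- blocks in the closure of the graph
      intro i
      rw [mem_zClosureVV_iff]
      intro Q hQ
      have hd' : permutePart σ q (σ i) = q i := permutePart_apply_perm σ i
      set Qc : (Idx n (q i) ⊕ Idx n (q i)) → MvPolynomial (Idx n p ⊕ Idx n p) ℂ := fun z =>
        match z with
        | Sum.inl (m, a, b) => MvPolynomial.X (Sum.inl (m, embE hs ⟨i, a⟩, embE hs ⟨i, b⟩))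
        | Sum.inr (m, a, b) => MvPolynomial.X (Sum.inr (m, embE hs' ⟨σ i, finCongr hd'.symm a⟩,
            embE hs' ⟨σ i, finCongr hd'.symm b⟩)) with hQc
      have hcoord : ∀ (x : MatT n p × MatT n p) (z : Idx n (q i) ⊕ Idx n (q i)),
          coordsVV (blockAt q x.1 i i (q i) (q i),
            blockAt (permutePart σ q) x.2 (σ i) (σ i) (q i) (q i)) z
          = MvPolynomial.eval (coordsVV x) (Qc z) := by
        rintro x (⟨m, a, b⟩ | ⟨m, a, b⟩)
        · rw [show Qc (Sum.inl (m, a, b)) = MvPolynomial.X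
            (Sum.inl (m, embE hs ⟨i, a⟩, embE hs ⟨i, b⟩)) from rfl, MvPolynomial.eval_X]
          show blockEntry q x.1 m i i (a : ℕ) (b : ℕ) = _
          rw [blockEntry_eq hs x.1 m a.2 b.2]
          rfl
        · rw [show Qc (Sum.inr (m, a, b)) = MvPolynomial.X
            (Sum.inr (m, embE hs' ⟨σ i, finCongr hd'.symm a⟩, embE hs' ⟨σ i, finCongr hd'.symm b⟩))
            from rfl, MvPolynomial.eval_X]
          show blockEntry (permutePart σ q) x.2 m (σ i) (σ i) (a : ℕ) (b : ℕ) = _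
          rw [blockEntry_eq hs' x.2 m (show (a : ℕ) < permutePart σ q (σ i) by
              rw [hd']; exact a.2)
            (show (b : ℕ) < permutePart σ q (σ i) by rw [hd']; exact b.2)]
          rfl
      have hbind : ∀ (v : Idx n p ⊕ Idx n p → ℂ),
          MvPolynomial.eval (fun z => MvPolynomial.eval v (Qc z)) Q
            = MvPolynomial.eval v (MvPolynomial.bind₁ Qc Q) :=
        fun v => vanish_comp _ Qc (fun _ _ => rfl) Q v
      have hvan : ∀ y ∈ P2Orbit n p q σ,
          MvPolynomial.eval (coordsVV y) (MvPolynomial.bind₁ Qc Q) = 0 := by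
        intro y hy
        rw [← hbind (coordsVV y),
          show (fun z => MvPolynomial.eval (coordsVV y) (Qc z)) = coordsVV
            (blockAt q y.1 i i (q i) (q i),
              blockAt (permutePart σ q) y.2 (σ i) (σ i) (q i) (q i)) from
            by funext z; exact (hcoord y z).symm]
        exact hQ _ ((P2Orbit_blocks hq σ hy).2.2 i)
      have h1 := hAA _ hvan
      rw [← hbind (coordsVV AA),
        show (fun z => MvPolynomial.eval (coordsVV AA) (Qc z)) = coordsVV
          (blockAt q AA.1 i i (q i) (q i),
            blockAt (permutePart σ q) AA.2 (σ i) (σ i) (q i) (q i)) from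
          by funext z; exact (hcoord AA z).symm] at h1
      exact h1
  · -- backward direction
    rintro ⟨hA1, hA2, hblocks⟩ P hP
    suffices claim : ∀ j : ℕ, ∀ x : MatT n p × MatT n p, x.1 ∈ VPi n p q →
        x.2 ∈ VPi n p (permutePart σ q) →
        (∀ i : Fin k, (i : ℕ) < j →
          (blockAt q x.1 i i (q i) (q i),
            blockAt (permutePart σ q) x.2 (σ i) (σ i) (q i) (q i)) ∈
            zClosureVV (graphG n (q i))) →
        (∀ i : Fin k, j ≤ (i : ℕ) →
          (blockAt q x.1 i i (q i) (q i),
            blockAt (permutePart σ q) x.2 (σ i) (σ i) (q i) (q i)) ∈ graphG n (q i)) →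
        MvPolynomial.eval (coordsVV x) P = 0 by
      exact claim k AA hA1 hA2 (fun i _ => hblocks i) (fun i hi => absurd i.2 (not_lt.2 hi))
    intro j
    induction j with
    | zero =>
      intro x hx1 hx2 _ hgr
      choose C h hC using fun i => hgr i (Nat.zero_le _)
      apply hP
      apply mem_P2Orbit_of_blocks hq σ hx1 hx2 h
      intro i
      have e1 := congrArg Prod.fst (hC i)
      have e2 := congrArg Prod.snd (hC i)
      simp only at e1 e2
      rw [e2, ← e1]
    | succ j ih =>
      intro x hx1 hx2 hcl hgr
      by_cases hjk : j < k
      · set i₀ : Fin k := ⟨j, hjk⟩ with hi₀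
        have hd' : permutePart σ q (σ i₀) = q i₀ := permutePart_apply_perm σ i₀
        set ψ : MatT n (q i₀) × MatT n (q i₀) → MatT n p × MatT n p := fun y =>
          (repl hs x.1 i₀ (q i₀) rfl y.1, repl hs' x.2 (σ i₀) (q i₀) hd' y.2) with hψ
        set Qψ : (Idx n p ⊕ Idx n p) → MvPolynomial (Idx n (q i₀) ⊕ Idx n (q i₀)) ℂ := fun z =>
          match z with
          | Sum.inl (m, r, c) =>
            if h : ((embE hs).symm r).1 = i₀ ∧ ((embE hs).symm c).1 = i₀
            then MvPolynomial.X (Sum.inl (m,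
              finCongr (show q ((embE hs).symm r).1 = q i₀ by rw [h.1]) ((embE hs).symm r).2,
              finCongr (show q ((embE hs).symm c).1 = q i₀ by rw [h.2]) ((embE hs).symm c).2))
            else MvPolynomial.C (x.1 m r c)
          | Sum.inr (m, r, c) =>
            if h : ((embE hs').symm r).1 = σ i₀ ∧ ((embE hs').symm c).1 = σ i₀
            then MvPolynomial.X (Sum.inr (m,
              finCongr (show permutePart σ q ((embE hs').symm r).1 = q i₀ by rw [h.1, hd'])
                ((embE hs').symm r).2,
              finCongr (show permutePart σ q ((embE hs').symm c).1 = q i₀ by rw [h.2, hd'])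
                ((embE hs').symm c).2))
            else MvPolynomial.C (x.2 m r c) with hQψ
        have hcoordψ : ∀ (y : MatT n (q i₀) × MatT n (q i₀)) (z : Idx n p ⊕ Idx n p),
            coordsVV (ψ y) z = MvPolynomial.eval (coordsVV y) (Qψ z) := by
          rintro y (⟨m, r, c⟩ | ⟨m, r, c⟩)
          · show repl hs x.1 i₀ (q i₀) rfl y.1 m r c = _
            rw [show Qψ (Sum.inl (m, r, c)) = (if h : ((embE hs).symm r).1 = i₀ ∧
                ((embE hs).symm c).1 = i₀
              then MvPolynomial.X (Sum.inl (m,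
                finCongr (show q ((embE hs).symm r).1 = q i₀ by rw [h.1]) ((embE hs).symm r).2,
                finCongr (show q ((embE hs).symm c).1 = q i₀ by rw [h.2]) ((embE hs).symm c).2))
              else MvPolynomial.C (x.1 m r c)) from rfl]
            by_cases hcond : ((embE hs).symm r).1 = i₀ ∧ ((embE hs).symm c).1 = i₀
            · rw [dif_pos hcond, MvPolynomial.eval_X]
              show (if h : _ ∧ _ then _ else _) = _
              rw [dif_pos hcond]
              rfl
            · rw [dif_neg hcond, MvPolynomial.eval_C]
              show (if h : _ ∧ _ then _ else _) = _
              rw [dif_neg hcond]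
          · show repl hs' x.2 (σ i₀) (q i₀) hd' y.2 m r c = _
            rw [show Qψ (Sum.inr (m, r, c)) = (if h : ((embE hs').symm r).1 = σ i₀ ∧
                ((embE hs').symm c).1 = σ i₀
              then MvPolynomial.X (Sum.inr (m,
                finCongr (show permutePart σ q ((embE hs').symm r).1 = q i₀ by rw [h.1, hd'])
                  ((embE hs').symm r).2,
                finCongr (show permutePart σ q ((embE hs').symm c).1 = q i₀ by rw [h.2, hd'])
                  ((embE hs').symm c).2))
              else MvPolynomial.C (x.2 m r c)) from rfl]
            by_cases hcond : ((embE hs').symm r).1 = σ i₀ ∧ ((embE hs').symm c).1 = σ i₀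
            · rw [dif_pos hcond, MvPolynomial.eval_X]
              show (if h : _ ∧ _ then _ else _) = _
              rw [dif_pos hcond]
              rfl
            · rw [dif_neg hcond, MvPolynomial.eval_C]
              show (if h : _ ∧ _ then _ else _) = _
              rw [dif_neg hcond]
        have hbindψ : ∀ (v : Idx n (q i₀) ⊕ Idx n (q i₀) → ℂ),
            MvPolynomial.eval (fun z => MvPolynomial.eval v (Qψ z)) P
              = MvPolynomial.eval v (MvPolynomial.bind₁ Qψ P) :=
          fun v => vanish_comp _ Qψ (fun _ _ => rfl) P v
        -- the pulled-back polynomial vanishes on the graph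
        have hvanψ : ∀ y ∈ graphG n (q i₀),
            MvPolynomial.eval (coordsVV y) (MvPolynomial.bind₁ Qψ P) = 0 := by
          intro y hy
          rw [← hbindψ (coordsVV y),
            show (fun z => MvPolynomial.eval (coordsVV y) (Qψ z)) = coordsVV (ψ y) from
              by funext z; exact (hcoordψ y z).symm]
          -- apply the induction hypothesis to ψ y
          apply ih (ψ y)
          · exact repl_mem_VPi hs hx1 i₀ (q i₀) rfl y.1
          · exact repl_mem_VPi hs' hx2 (σ i₀) (q i₀) hd' y.2
          · intro i hi
            have hne : i ≠ i₀ := by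
              intro h
              rw [h] at hi
              exact lt_irrefl _ hi
            have r1 : blockAt q (ψ y).1 i i (q i) (q i) = blockAt q x.1 i i (q i) (q i) :=
              blockAt_repl_ne hs x.1 hne (q i₀) rfl y.1 (q i) rfl
            have r2 : blockAt (permutePart σ q) (ψ y).2 (σ i) (σ i) (q i) (q i)
                = blockAt (permutePart σ q) x.2 (σ i) (σ i) (q i) (q i) :=
              blockAt_repl_ne hs' x.2 (fun h => hne (σ.injective h)) (q i₀) hd' y.2 (q i)
                (permutePart_apply_perm σ i)
            rw [r1, r2]
            exact hcl i (Nat.lt_succ_of_lt hi)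
          · intro i hi
            by_cases hii : i = i₀
            · rw [hii]
              have r1 : blockAt q (ψ y).1 i₀ i₀ (q i₀) (q i₀) = y.1 :=
                blockAt_repl_self hs x.1 i₀ (q i₀) rfl y.1
              have r2 : blockAt (permutePart σ q) (ψ y).2 (σ i₀) (σ i₀) (q i₀) (q i₀) = y.2 :=
                blockAt_repl_self hs' x.2 (σ i₀) (q i₀) hd' y.2
              rw [r1, r2]
              exact hy
            · have hji : j < (i : ℕ) := by
                rcases Nat.lt_or_ge j (i : ℕ) with h | h
                · exact h
                · exfalso
                  have : (i : ℕ) = j := le_antisymm (by omega) (by omega)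
                  exact hii (Fin.ext this)
              have r1 : blockAt q (ψ y).1 i i (q i) (q i) = blockAt q x.1 i i (q i) (q i) :=
                blockAt_repl_ne hs x.1 hii (q i₀) rfl y.1 (q i) rfl
              have r2 : blockAt (permutePart σ q) (ψ y).2 (σ i) (σ i) (q i) (q i)
                  = blockAt (permutePart σ q) x.2 (σ i) (σ i) (q i) (q i) :=
                blockAt_repl_ne hs' x.2 (fun h => hii (σ.injective h)) (q i₀) hd' y.2 (q i)
                  (permutePart_apply_perm σ i)
              rw [r1, r2]
              exact hgr i (by omega)
        -- the block pair of x at i₀ is in the closure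
        have hcl₀ := hcl i₀ (Nat.lt_succ_self j)
        rw [mem_zClosureVV_iff] at hcl₀
        have h1 := hcl₀ (MvPolynomial.bind₁ Qψ P) hvanψ
        rw [← hbindψ _,
          show (fun z => MvPolynomial.eval (coordsVV
            (blockAt q x.1 i₀ i₀ (q i₀) (q i₀),
              blockAt (permutePart σ q) x.2 (σ i₀) (σ i₀) (q i₀) (q i₀))) (Qψ z))
            = coordsVV (ψ (blockAt q x.1 i₀ i₀ (q i₀) (q i₀),
              blockAt (permutePart σ q) x.2 (σ i₀) (σ i₀) (q i₀) (q i₀))) from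
            by funext z; exact (hcoordψ _ z).symm] at h1
        have hψx : ψ (blockAt q x.1 i₀ i₀ (q i₀) (q i₀),
            blockAt (permutePart σ q) x.2 (σ i₀) (σ i₀) (q i₀) (q i₀)) = x := by
          rw [hψ]
          show (repl hs x.1 i₀ (q i₀) rfl _, repl hs' x.2 (σ i₀) (q i₀) hd' _) = x
          rw [repl_blockAt_self hs x.1 i₀ (q i₀) rfl,
            repl_blockAt_self hs' x.2 (σ i₀) (q i₀) hd']
        rw [hψx] at h1
        exact h1
      · exact ih x hx1 hx2 (fun i hi => hcl i (Nat.lt_succ_of_lt hi))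
          (fun i _ => absurd i.2 (by omega))
end

section
/- For ordered partitions π and π̂ of p, the inclusion G·V_π ⊆ G·V_π̂ holds if and only if π ≤ π̂. -/
open Matrix MvPolynomial

namespace Stmt7Aux

open Matrix

/-- Partial sums of a partition. -/
def Dsum {k : ℕ} (q : Fin k → ℕ) (t : ℕ) : ℕ :=
  ∑ j : Fin k, if (j : ℕ) < t then q j else 0

lemma off_eq {k : ℕ} (q : Fin k → ℕ) (i : Fin k) : off q i = Dsum q (i : ℕ) := by
  unfold off Dsum
  exact Finset.sum_congr rfl (fun j _ => if_congr Fin.lt_def rfl rfl)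

lemma Dsum_zero {k : ℕ} (q : Fin k → ℕ) : Dsum q 0 = 0 :=
  Finset.sum_eq_zero (fun j _ => by simp)

lemma Dsum_succ_of_lt {k : ℕ} (q : Fin k → ℕ) {t : ℕ} (h : t < k) :
    Dsum q (t + 1) = Dsum q t + q ⟨t, h⟩ := by
  unfold Dsum
  have key : ∀ j : Fin k, (if (j:ℕ) < t + 1 then q j else 0)
      = (if (j:ℕ) < t then q j else 0) + (if (j:ℕ) = t then q j else 0) := by
    intro j; split_ifs <;> omega
  rw [Finset.sum_congr rfl (fun j _ => key j), Finset.sum_add_distrib]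
  congr 1
  rw [Finset.sum_eq_single (⟨t, h⟩ : Fin k)]
  · simp
  · intro b _ hb
    rw [if_neg]
    intro hbv; exact hb (Fin.ext hbv)
  · intro habs; exact absurd (Finset.mem_univ _) habs

lemma Dsum_succ_of_ge {k : ℕ} (q : Fin k → ℕ) {t : ℕ} (h : k ≤ t) :
    Dsum q (t + 1) = Dsum q t := by
  unfold Dsum
  apply Finset.sum_congr rfl
  intro j _
  have := j.isLt
  rw [if_pos (by omega), if_pos (by omega)]

lemma Dsum_of_ge {k : ℕ} (q : Fin k → ℕ) {t : ℕ} (h : k ≤ t) :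
    Dsum q t = ∑ j, q j := by
  unfold Dsum
  apply Finset.sum_congr rfl
  intro j _; rw [if_pos (lt_of_lt_of_le j.isLt h)]

lemma Dsum_mono {k : ℕ} (q : Fin k → ℕ) {t u : ℕ} (h : t ≤ u) :
    Dsum q t ≤ Dsum q u := by
  apply Finset.sum_le_sum
  intro j _; split_ifs <;> omega

lemma Dsum_le_sum {k : ℕ} (q : Fin k → ℕ) (t : ℕ) : Dsum q t ≤ ∑ j, q j :=
  le_trans (Dsum_mono q (show t ≤ k + t by omega)) (le_of_eq (Dsum_of_ge q (by omega)))

lemma Dsum_lt_of_lt {k : ℕ} {q : Fin k → ℕ} (hpos : ∀ i, 0 < q i) {t u : ℕ}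
    (h : t < u) (hu : u ≤ k) : Dsum q t < Dsum q u := by
  have htk : t < k := by omega
  have h1 : Dsum q (t+1) = Dsum q t + q ⟨t, htk⟩ := Dsum_succ_of_lt q htk
  have h2 := hpos ⟨t, htk⟩
  have h3 : Dsum q (t+1) ≤ Dsum q u := Dsum_mono q (by omega)
  omega

lemma exists_blk {k p : ℕ} {q : Fin k → ℕ} (hsum : ∑ i, q i = p) {r : ℕ} (hr : r < p) :
    ∃ i : Fin k, Dsum q (i:ℕ) ≤ r ∧ r < Dsum q (i:ℕ) + q i ∧
      Dsum q ((i:ℕ)+1) = Dsum q (i:ℕ) + q i := by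
  have hex : ∃ t, r < Dsum q t := ⟨k, by rw [Dsum_of_ge q le_rfl, hsum]; exact hr⟩
  have hlt : r < Dsum q (Nat.find hex) := Nat.find_spec hex
  have ht0pos : Nat.find hex ≠ 0 := by
    intro h0
    rw [h0, Dsum_zero] at hlt; omega
  obtain ⟨s, hs⟩ := Nat.exists_eq_succ_of_ne_zero ht0pos
  have hle : Dsum q s ≤ r := by
    by_contra hcon
    exact Nat.find_min hex (m := s) (by omega) (by omega)
  have hsk : s < k := by
    by_contra hcon
    rw [Dsum_of_ge q (by omega), hsum] at hle; omega
  have hsucc := Dsum_succ_of_lt q hsk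
  rw [hs, Nat.succ_eq_add_one] at hlt
  refine ⟨⟨s, hsk⟩, ?_, ?_, ?_⟩ <;> simp only [Fin.val_mk] <;> omega

end Stmt7Aux
namespace Stmt7Aux

open Matrix

/-- The flag subspace of vectors supported on coordinates `< s`. -/
noncomputable def flagF (p s : ℕ) : Submodule ℂ (Fin p → ℂ) where
  carrier := {v | ∀ r : Fin p, s ≤ (r:ℕ) → v r = 0}
  add_mem' := by intro a b ha hb r hr; simp [ha r hr, hb r hr]
  zero_mem' := by intro r _; rfl
  smul_mem' := by intro c v hv r hr; simp [hv r hr]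

lemma mem_flagF {p s : ℕ} {v : Fin p → ℂ} :
    v ∈ flagF p s ↔ ∀ r : Fin p, s ≤ (r:ℕ) → v r = 0 := Iff.rfl

lemma flagF_top (p : ℕ) {s : ℕ} (h : p ≤ s) : flagF p s = ⊤ := by
  ext v
  simp only [Submodule.mem_top, iff_true, mem_flagF]
  intro r hr
  have := r.isLt
  omega

lemma flagF_zero (p : ℕ) : flagF p 0 = ⊥ := by
  ext v
  simp only [Submodule.mem_bot, mem_flagF]
  constructor
  · intro h; funext r; exact h r (by omega)
  · intro h r _; rw [h]; rfl

/-- Extension by zero, `(Fin s → ℂ) →ₗ (Fin p → ℂ)`. -/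
noncomputable def extMap (p s : ℕ) : (Fin s → ℂ) →ₗ[ℂ] (Fin p → ℂ) where
  toFun w := fun r => if hr : (r:ℕ) < s then w ⟨r, hr⟩ else 0
  map_add' a b := by funext r; by_cases hr : (r:ℕ) < s <;> simp [hr]
  map_smul' c a := by funext r; by_cases hr : (r:ℕ) < s <;> simp [hr]

lemma range_extMap {p s : ℕ} (h : s ≤ p) :
    LinearMap.range (extMap p s) = flagF p s := by
  ext v
  constructor
  · rintro ⟨w, rfl⟩
    rw [mem_flagF]
    intro r hr
    show (if hr : (r:ℕ) < s then w ⟨r, hr⟩ else 0) = 0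
    rw [dif_neg (by omega)]
  · intro hv
    refine ⟨fun a => v ⟨a, lt_of_lt_of_le a.isLt h⟩, ?_⟩
    funext r
    show (if hr : (r:ℕ) < s then v ⟨(r:ℕ), lt_of_lt_of_le hr h⟩ else 0) = v r
    split_ifs with hr
    · congr 1
    · exact (mem_flagF.mp hv r (by omega)).symm

lemma extMap_inj {p s : ℕ} (h : s ≤ p) : Function.Injective (extMap p s) := by
  intro a b hab
  funext i
  have := congrFun hab ⟨i, lt_of_lt_of_le i.isLt h⟩
  simpa [extMap] using this

lemma finrank_flagF {p s : ℕ} (h : s ≤ p) : Module.finrank ℂ (flagF p s) = s := by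
  rw [← range_extMap h, LinearMap.finrank_range_of_inj (extMap_inj h),
    Module.finrank_fin_fun]

/-- Entry of `mulVec`. -/
lemma mulVec_apply {p : ℕ} (M : Matrix (Fin p) (Fin p) ℂ) (v : Fin p → ℂ) (r : Fin p) :
    M.mulVec v r = ∑ c, M r c * v c := rfl

lemma VPi_entries {n p k : ℕ} {q : Fin k → ℕ} (hq : IsOrderedPartition p q)
    {A : MatT n p} (hA : A ∈ VPi n p q) (m : Fin n) (r c : Fin p) (t : ℕ)
    (hc : (c:ℕ) < Dsum q t) (hr : Dsum q t ≤ (r:ℕ)) : A m r c = 0 := by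
  obtain ⟨hpos, hsum⟩ := hq
  obtain ⟨i, hi1, hi2, hi3⟩ := exists_blk hsum r.isLt
  obtain ⟨j, hj1, hj2, hj3⟩ := exists_blk hsum c.isLt
  have hji : j < i := by
    rw [Fin.lt_def]
    have hjt : (j:ℕ) < t := by
      by_contra hcon
      have := Dsum_mono q (show t ≤ (j:ℕ) from by omega)
      omega
    have hti : t ≤ (i:ℕ) := by
      by_contra hcon
      have := Dsum_mono q (show (i:ℕ)+1 ≤ t from by omega)
      omega
    omega
  have hbe := hA m i j hji ((r:ℕ) - Dsum q (i:ℕ)) ((c:ℕ) - Dsum q (j:ℕ)) (by omega) (by omega)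
  have hoff_i := off_eq q i
  have hoff_j := off_eq q j
  have hcond : off q i + ((r:ℕ) - Dsum q (i:ℕ)) < p ∧
      off q j + ((c:ℕ) - Dsum q (j:ℕ)) < p := by
    constructor
    · rw [hoff_i]; have := r.isLt; omega
    · rw [hoff_j]; have := c.isLt; omega
  unfold blockEntry at hbe
  rw [dif_pos hcond] at hbe
  rw [show (⟨off q i + ((r:ℕ) - Dsum q (i:ℕ)), hcond.1⟩ : Fin p) = r from
        Fin.ext (by show off q i + ((r:ℕ) - Dsum q (i:ℕ)) = (r:ℕ); omega),
      show (⟨off q j + ((c:ℕ) - Dsum q (j:ℕ)), hcond.2⟩ : Fin p) = c from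
        Fin.ext (by show off q j + ((c:ℕ) - Dsum q (j:ℕ)) = (c:ℕ); omega)] at hbe
  exact hbe

lemma entries_to_VPi {n p k : ℕ} {q : Fin k → ℕ} {A : MatT n p}
    (hE : ∀ (m : Fin n) (r c : Fin p) (t : ℕ),
      (c:ℕ) < Dsum q t → Dsum q t ≤ (r:ℕ) → A m r c = 0) :
    A ∈ VPi n p q := by
  intro m i j hji a b ha hb
  unfold blockEntry
  split
  case isTrue h =>
    refine hE m _ _ ((j:ℕ)+1) ?_ ?_
    · show off q j + b < Dsum q ((j:ℕ)+1)
      have e1 := off_eq q j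
      have e2 := Dsum_succ_of_lt q j.isLt
      simp only [Fin.eta] at e2
      omega
    · show Dsum q ((j:ℕ)+1) ≤ off q i + a
      have e1 := off_eq q i
      have hji' : (j:ℕ) + 1 ≤ (i:ℕ) := hji
      have := Dsum_mono q hji'
      omega
  case isFalse h => rfl

lemma VPi_flag_inv {n p k : ℕ} {q : Fin k → ℕ} (hq : IsOrderedPartition p q)
    {A : MatT n p} (hA : A ∈ VPi n p q) (m : Fin n) (t : ℕ) :
    ∀ v ∈ flagF p (Dsum q t), (A m).mulVec v ∈ flagF p (Dsum q t) := by
  intro v hv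
  rw [mem_flagF] at hv ⊢
  intro r hr
  rw [mulVec_apply]
  apply Finset.sum_eq_zero
  intro c _
  by_cases hc : (c:ℕ) < Dsum q t
  · rw [VPi_entries hq hA m r c t hc hr, zero_mul]
  · rw [hv c (by omega), mul_zero]

end Stmt7Aux
namespace Stmt7Aux

open Matrix

/-- The full nilpotent Jordan block (ones on the superdiagonal). -/
noncomputable def Jmat (p : ℕ) : Matrix (Fin p) (Fin p) ℂ :=
  Matrix.of fun r c => if (r:ℕ) + 1 = (c:ℕ) then 1 else 0

lemma sum_ite_val {p : ℕ} (f : Fin p → ℂ) (s : ℕ) :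
    (∑ c : Fin p, if (c:ℕ) = s then f c else 0) = if h : s < p then f ⟨s, h⟩ else 0 := by
  split_ifs with h
  · rw [Finset.sum_eq_single (⟨s, h⟩ : Fin p)]
    · simp
    · intro b _ hb
      exact if_neg (fun hv => hb (Fin.ext hv))
    · intro habs; exact absurd (Finset.mem_univ _) habs
  · exact Finset.sum_eq_zero fun c _ => if_neg (fun hv => h (by have := c.isLt; omega))

lemma Jmat_mulVec {p : ℕ} (v : Fin p → ℂ) (r : Fin p) :
    (Jmat p).mulVec v r = if h : (r:ℕ) + 1 < p then v ⟨(r:ℕ)+1, h⟩ else 0 := by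
  rw [mulVec_apply]
  have key : ∀ c : Fin p, (Jmat p) r c * v c = if (c:ℕ) = (r:ℕ)+1 then v c else 0 := by
    intro c
    show (if (r:ℕ) + 1 = (c:ℕ) then (1:ℂ) else 0) * v c = _
    by_cases h1 : (r:ℕ) + 1 = (c:ℕ)
    · rw [if_pos h1, if_pos h1.symm, one_mul]
    · rw [if_neg h1, if_neg (fun hv => h1 hv.symm), zero_mul]
  rw [Finset.sum_congr rfl (fun c _ => key c), sum_ite_val]

lemma Jpow_mulVec {p : ℕ} (j : ℕ) (v : Fin p → ℂ) (r : Fin p) :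
    ((Jmat p)^j).mulVec v r = if h : (r:ℕ) + j < p then v ⟨(r:ℕ)+j, h⟩ else 0 := by
  induction j generalizing v with
  | zero =>
    rw [pow_zero, Matrix.one_mulVec, dif_pos (show (r:ℕ) + 0 < p by have := r.isLt; omega)]
    exact congrArg v (Fin.ext (by show (r:ℕ) = (r:ℕ) + 0; omega))
  | succ i ih =>
    rw [pow_succ, ← Matrix.mulVec_mulVec, ih]
    by_cases h1 : (r:ℕ) + i < p
    · rw [dif_pos h1, Jmat_mulVec]
      by_cases h2 : (r:ℕ) + (i+1) < p
      · rw [dif_pos (show ((⟨(r:ℕ)+i, h1⟩ : Fin p):ℕ) + 1 < p from by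
          show (r:ℕ) + i + 1 < p; omega), dif_pos h2]
        exact congrArg v (Fin.ext (by show (r:ℕ) + i + 1 = (r:ℕ) + (i+1); omega))
      · rw [dif_neg (show ¬(((⟨(r:ℕ)+i, h1⟩ : Fin p):ℕ) + 1 < p) from by
          show ¬((r:ℕ) + i + 1 < p); omega), dif_neg (by omega)]
    · rw [dif_neg h1, dif_neg (by omega)]

/-- Classification of subspaces invariant under the full Jordan block. -/
lemma inv_J {p : ℕ} (W : Submodule ℂ (Fin p → ℂ))
    (hW : ∀ v ∈ W, (Jmat p).mulVec v ∈ W) : ∃ s ≤ p, W = flagF p s := by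
  classical
  have hex : ∃ s, s ≤ p ∧ W ≤ flagF p s :=
    ⟨p, le_rfl, by rw [flagF_top p le_rfl]; exact le_top⟩
  obtain ⟨hs0p, hWle⟩ := Nat.find_spec hex
  refine ⟨Nat.find hex, hs0p, le_antisymm hWle ?_⟩
  rcases Nat.eq_zero_or_pos (Nat.find hex) with h0 | hpos
  · rw [h0, flagF_zero]; exact bot_le
  obtain ⟨s, hs⟩ := Nat.exists_eq_succ_of_ne_zero (by omega : Nat.find hex ≠ 0)
  rw [hs] at hs0p hWle ⊢
  rw [Nat.succ_eq_add_one] at hs0p hWle ⊢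
  have hnot : ¬ (s ≤ p ∧ W ≤ flagF p s) := Nat.find_min hex (m := s) (by omega)
  have hsp : s < p := by omega
  have hwit : ∃ v ∈ W, ¬ v ∈ flagF p s := by
    by_contra hcon
    push_neg at hcon
    exact hnot ⟨by omega, fun v hv => hcon v hv⟩
  obtain ⟨v, hvW, hvn⟩ := hwit
  have hvflag : v ∈ flagF p (s+1) := hWle hvW
  have hvs : v ⟨s, hsp⟩ ≠ 0 := by
    intro h0
    apply hvn
    rw [mem_flagF]
    intro r hr
    rcases eq_or_lt_of_le hr with heq | hlt
    · rw [show r = ⟨s, hsp⟩ from Fin.ext heq.symm]; exact h0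
    · exact mem_flagF.mp hvflag r hlt
  have hpow : ∀ jp : ℕ, ((Jmat p)^jp).mulVec v ∈ W := by
    intro jp
    induction jp with
    | zero => rw [pow_zero, Matrix.one_mulVec]; exact hvW
    | succ i ih =>
      have heq : ((Jmat p)^(i+1)).mulVec v = (Jmat p).mulVec (((Jmat p)^i).mulVec v) := by
        rw [Matrix.mulVec_mulVec, ← pow_succ']
      rw [heq]
      exact hW _ ih
  have main : ∀ t, t ≤ s + 1 → flagF p t ≤ W := by
    intro t
    induction t with
    | zero => intro _; rw [flagF_zero]; exact bot_le
    | succ t iht =>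
      intro hts
      have htp : t < p := by omega
      set w := ((Jmat p)^(s - t)).mulVec v with hwdef
      have hwW : w ∈ W := hpow _
      have hwt : w ⟨t, htp⟩ ≠ 0 := by
        rw [hwdef, Jpow_mulVec, dif_pos (show ((⟨t, htp⟩ : Fin p):ℕ) + (s - t) < p from by
          show t + (s-t) < p; omega)]
        rw [show (⟨((⟨t, htp⟩ : Fin p):ℕ) + (s-t), _⟩ : Fin p) = ⟨s, hsp⟩ from
          Fin.ext (by show t + (s-t) = s; omega)]
        exact hvs
      have hwflag : ∀ r : Fin p, t + 1 ≤ (r:ℕ) → w r = 0 := by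
        intro r hr
        rw [hwdef, Jpow_mulVec]
        split_ifs with h
        · exact mem_flagF.mp hvflag _ (by show s + 1 ≤ (r:ℕ) + (s - t); omega)
        · rfl
      intro u hu
      have hu' : ∀ r : Fin p, t + 1 ≤ (r:ℕ) → u r = 0 := mem_flagF.mp hu
      set cc := u ⟨t, htp⟩ / w ⟨t, htp⟩ with hccdef
      have hmem : u - cc • w ∈ flagF p t := by
        rw [mem_flagF]
        intro r hr
        rcases eq_or_lt_of_le hr with heq | hlt
        · rw [show r = ⟨t, htp⟩ from Fin.ext heq.symm]
          show u ⟨t, htp⟩ - cc * w ⟨t, htp⟩ = 0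
          rw [hccdef, div_mul_cancel₀ _ hwt, sub_self]
        · show u r - cc * w r = 0
          rw [hu' r hlt, hwflag r hlt, mul_zero, sub_zero]
      have hfin : u = (u - cc • w) + cc • w := by abel
      rw [hfin]
      exact W.add_mem (iht (by omega) hmem) (W.smul_mem cc hwW)
  exact main (s+1) le_rfl

end Stmt7Aux
namespace Stmt7Aux

open Matrix

/-- Ones on the subdiagonal positions interior to the blocks of `q`. -/
noncomputable def A2mat (p k : ℕ) (q : Fin k → ℕ) : Matrix (Fin p) (Fin p) ℂ :=
  Matrix.of fun r c =>
    if (c:ℕ) + 1 = (r:ℕ) ∧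
        ∃ i : Fin k, Dsum q (i:ℕ) < (r:ℕ) ∧ (r:ℕ) < Dsum q ((i:ℕ)+1) then 1 else 0

lemma not_boundary {k : ℕ} {q : Fin k → ℕ} {r : ℕ}
    (hi : ∃ i : Fin k, Dsum q (i:ℕ) < r ∧ r < Dsum q ((i:ℕ)+1)) (t : ℕ) :
    Dsum q t ≠ r := by
  obtain ⟨i, h1, h2⟩ := hi
  intro heq
  rcases le_or_gt t (i:ℕ) with h | h
  · have := Dsum_mono q h; omega
  · have := Dsum_mono q (show (i:ℕ)+1 ≤ t by omega); omega

/-- The generic element of `V_π`. -/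
noncomputable def AstarT (n p k : ℕ) (q : Fin k → ℕ) : MatT n p :=
  fun m => if (m:ℕ) = 0 then Jmat p else if (m:ℕ) = 1 then A2mat p k q else 0

lemma Astar_mem {n p k : ℕ} (q : Fin k → ℕ) : AstarT n p k q ∈ VPi n p q := by
  apply entries_to_VPi
  intro m r c t hc hr
  unfold AstarT
  split_ifs with h0 h1
  · show (if (r:ℕ) + 1 = (c:ℕ) then (1:ℂ) else 0) = 0
    rw [if_neg (by omega)]
  · show (if ((c:ℕ) + 1 = (r:ℕ) ∧ ∃ i : Fin k, Dsum q (i:ℕ) < (r:ℕ) ∧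
        (r:ℕ) < Dsum q ((i:ℕ)+1)) then (1:ℂ) else 0) = 0
    rw [if_neg]
    rintro ⟨hrc, hex⟩
    exact not_boundary hex t (by omega)
  · rfl

lemma gconj_one {n p : ℕ} (A : MatT n p) : gconj 1 A = A := by
  funext m
  unfold gconj
  simp

/-- The linear automorphism of `ℂ^p` given by `g ∈ GL_p(ℂ)`. -/
noncomputable def glEquiv {p : ℕ} (g : Matrix.GeneralLinearGroup (Fin p) ℂ) :
    (Fin p → ℂ) ≃ₗ[ℂ] (Fin p → ℂ) :=
  LinearEquiv.ofLinear
    (Matrix.mulVecLin (g : Matrix (Fin p) (Fin p) ℂ))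
    (Matrix.mulVecLin ((g⁻¹ : Matrix.GeneralLinearGroup (Fin p) ℂ) : Matrix (Fin p) (Fin p) ℂ))
    (by rw [← Matrix.mulVecLin_mul, Units.mul_inv, Matrix.mulVecLin_one])
    (by rw [← Matrix.mulVecLin_mul, Units.inv_mul, Matrix.mulVecLin_one])

lemma gconj_mulVec {n p : ℕ} (g : Matrix.GeneralLinearGroup (Fin p) ℂ)
    (B : MatT n p) (m : Fin n) (w : Fin p → ℂ) :
    (gconj g B m).mulVec ((g : Matrix (Fin p) (Fin p) ℂ).mulVec w)
      = (g : Matrix (Fin p) (Fin p) ℂ).mulVec ((B m).mulVec w) := by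
  unfold gconj
  rw [Matrix.mulVec_mulVec, Matrix.mulVec_mulVec]
  rw [mul_assoc ((g : Matrix (Fin p) (Fin p) ℂ) * B m), Units.inv_mul, mul_one]

lemma flag_inv_A2_boundary {p k : ℕ} {q : Fin k → ℕ} (hq : IsOrderedPartition p q)
    {s : ℕ} (hs : s ≤ p)
    (hinv : ∀ v ∈ flagF p s, (A2mat p k q).mulVec v ∈ flagF p s) :
    ∃ u ≤ k, Dsum q u = s := by
  obtain ⟨hpos, hsum⟩ := hq
  by_contra hcon
  push_neg at hcon
  have hs0 : s ≠ 0 := fun h => hcon 0 (by omega) (by rw [Dsum_zero]; omega)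
  have hsp : s ≠ p := fun h => hcon k le_rfl (by rw [Dsum_of_ge q le_rfl, hsum, h])
  have hsp' : s < p := by omega
  obtain ⟨s1, hs1⟩ := Nat.exists_eq_succ_of_ne_zero hs0
  rw [hs1] at hsp' hcon hinv
  simp only [Nat.succ_eq_add_one] at hsp' hcon hinv
  obtain ⟨i, h1, h2, h3⟩ := exists_blk hsum hsp'
  have h1' : Dsum q (i:ℕ) < s1 + 1 :=
    lt_of_le_of_ne h1 (hcon (i:ℕ) (le_of_lt i.isLt))
  have hs1p : s1 < p := by omega
  set v : Fin p → ℂ := Pi.single ⟨s1, hs1p⟩ (1:ℂ) with hv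
  have hvmem : v ∈ flagF p (s1+1) := by
    rw [mem_flagF]
    intro r hr
    rw [hv]
    rw [Pi.single_apply, if_neg]
    intro heq
    rw [heq] at hr
    revert hr
    show ¬ (s1 + 1 ≤ s1)
    omega
  have hmv := hinv v hvmem
  rw [mem_flagF] at hmv
  have happ := hmv ⟨s1+1, hsp'⟩ (by show s1 + 1 ≤ s1 + 1; omega)
  rw [hv, Matrix.mulVec_single] at happ
  simp only [MulOpposite.op_one, one_smul, Matrix.col_apply] at happ
  have hentry : A2mat p k q ⟨s1+1, hsp'⟩ ⟨s1, hs1p⟩ = 1 := by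
    show (if ((⟨s1, hs1p⟩ : Fin p):ℕ) + 1 = ((⟨s1+1, hsp'⟩ : Fin p):ℕ) ∧
        ∃ ii : Fin k, Dsum q (ii:ℕ) < ((⟨s1+1, hsp'⟩ : Fin p):ℕ) ∧
          ((⟨s1+1, hsp'⟩ : Fin p):ℕ) < Dsum q ((ii:ℕ)+1) then (1:ℂ) else 0) = 1
    rw [if_pos]
    refine ⟨rfl, ⟨i, ?_, ?_⟩⟩
    · show Dsum q (i:ℕ) < s1 + 1; omega
    · show s1 + 1 < Dsum q ((i:ℕ)+1); omega
  rw [hentry] at happ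
  exact one_ne_zero happ

lemma hard_dir {n p : ℕ} (hn : 2 ≤ n) {k k' : ℕ} {q : Fin k → ℕ}
    (hq : IsOrderedPartition p q) {q' : Fin k' → ℕ} (hq' : IsOrderedPartition p q')
    (hsub : GOrbit n p (VPi n p q) ⊆ GOrbit n p (VPi n p q')) :
    ∀ t ≤ k', ∃ u ≤ k, Dsum q u = Dsum q' t := by
  intro t htk
  have hA : AstarT n p k q ∈ GOrbit n p (VPi n p q) :=
    ⟨1, AstarT n p k q, Astar_mem q, (gconj_one _).symm⟩
  obtain ⟨g, B, hB, hAB⟩ := hsub hA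
  set W : Submodule ℂ (Fin p → ℂ) :=
    Submodule.map ((glEquiv g : (Fin p → ℂ) →ₗ[ℂ] (Fin p → ℂ))) (flagF p (Dsum q' t)) with hWdef
  have hinvW : ∀ (m : Fin n), ∀ v ∈ W, (AstarT n p k q m).mulVec v ∈ W := by
    intro m v hv
    rw [hWdef, Submodule.mem_map] at hv ⊢
    obtain ⟨w, hwflag, rfl⟩ := hv
    refine ⟨(B m).mulVec w, VPi_flag_inv hq' hB m t w hwflag, ?_⟩
    show (g : Matrix (Fin p) (Fin p) ℂ).mulVec ((B m).mulVec w)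
      = (AstarT n p k q m).mulVec ((g : Matrix (Fin p) (Fin p) ℂ).mulVec w)
    rw [hAB]
    exact (gconj_mulVec g B m w).symm
  have hJ : ∀ v ∈ W, (Jmat p).mulVec v ∈ W := by
    intro v hv
    have := hinvW ⟨0, by omega⟩ v hv
    simpa [AstarT] using this
  obtain ⟨s, hsp, hWs⟩ := inv_J W hJ
  have hDt : Dsum q' t ≤ p := by
    calc Dsum q' t ≤ ∑ j, q' j := Dsum_le_sum q' t
    _ = p := hq'.2
  have hr1 : Module.finrank ℂ W = Dsum q' t := by
    rw [hWdef, LinearEquiv.finrank_map_eq, finrank_flagF hDt]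
  have hr2 : Module.finrank ℂ W = s := by rw [hWs, finrank_flagF hsp]
  have hsDt : s = Dsum q' t := by omega
  have hA2 : ∀ v ∈ flagF p (Dsum q' t), (A2mat p k q).mulVec v ∈ flagF p (Dsum q' t) := by
    rw [← hsDt, ← hWs]
    intro v hv
    have := hinvW ⟨1, by omega⟩ v hv
    simpa [AstarT] using this
  exact flag_inv_A2_boundary hq hDt hA2

end Stmt7Aux
namespace Stmt7Aux

open Matrix

/-- Merge parts `j` and `j+1` of a partition. -/
def mergeAt {m : ℕ} (q : Fin (m+1) → ℕ) (j : Fin m) : Fin m → ℕ :=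
  fun i => if (i:ℕ) < (j:ℕ) then q i.castSucc
    else if (i:ℕ) = (j:ℕ) then q j.castSucc + q j.succ else q i.succ

lemma Dsum_merge {m : ℕ} {q : Fin (m+1) → ℕ} {q2 : Fin m → ℕ} {j : Fin m}
    (h1 : ∀ i : Fin m, (i:ℕ) < (j:ℕ) → q2 i = q i.castSucc)
    (h2 : q2 j = q j.castSucc + q j.succ)
    (h3 : ∀ i : Fin m, (j:ℕ) < (i:ℕ) → q2 i = q i.succ) :
    ∀ t : ℕ, (t ≤ (j:ℕ) → Dsum q2 t = Dsum q t) ∧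
      ((j:ℕ) < t → Dsum q2 t = Dsum q (t+1)) := by
  intro t
  induction t with
  | zero => exact ⟨fun _ => by rw [Dsum_zero, Dsum_zero], fun h => absurd h (by omega)⟩
  | succ a iha =>
    constructor
    · intro ha
      have ham : a < m := by have := j.isLt; omega
      rw [Dsum_succ_of_lt q2 ham, Dsum_succ_of_lt q (show a < m + 1 by omega)]
      rw [iha.1 (by omega)]
      congr 1
      rw [h1 ⟨a, ham⟩ (show a < (j:ℕ) by omega)]
      rfl
    · intro ha
      rcases Nat.lt_or_ge a m with ham | ham
      · rcases Nat.eq_or_lt_of_le (show (j:ℕ) ≤ a by omega) with hej | hlj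
        · rw [Dsum_succ_of_lt q2 ham,
            show (⟨a, ham⟩ : Fin m) = j from Fin.ext hej.symm, h2,
            iha.1 (by omega)]
          rw [show Dsum q (a+1+1) = Dsum q (a+1) + q ⟨a+1, by omega⟩ from
              Dsum_succ_of_lt q (by omega),
            show Dsum q (a+1) = Dsum q a + q ⟨a, by omega⟩ from
              Dsum_succ_of_lt q (by omega)]
          have e1 : q j.castSucc = q ⟨a, by omega⟩ := by
            congr 1
            exact Fin.ext (by simp [← hej])
          have e2 : q j.succ = q ⟨a+1, by omega⟩ := by
            congr 1
            exact Fin.ext (by simp [← hej])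
          omega
        · rw [Dsum_succ_of_lt q2 ham, h3 ⟨a, ham⟩ hlj, iha.2 hlj,
            show Dsum q (a+1+1) = Dsum q (a+1) + q ⟨a+1, by omega⟩ from
              Dsum_succ_of_lt q (by omega)]
          congr 1
      · rw [Dsum_succ_of_ge q2 ham, Dsum_succ_of_ge q (show m + 1 ≤ a + 1 by omega)]
        exact iha.2 (by have := j.isLt; omega)

lemma merge_step_prop {n p : ℕ} {a b : Σ kk : ℕ, Fin kk → ℕ} (h : IsMergeStep a b)
    (hpa : IsOrderedPartition p a.2) :
    IsOrderedPartition p b.2 ∧ VPi n p a.2 ⊆ VPi n p b.2 := by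
  obtain ⟨m, qa, qb, j, ha, hb, h1, h2, h3⟩ := h
  subst ha; subst hb
  obtain ⟨hpos, hsum⟩ := hpa
  have hD := Dsum_merge h1 h2 h3
  have hsum2 : ∑ i, qb i = p := by
    have e1 : ∑ i, qb i = Dsum qb m := (Dsum_of_ge qb le_rfl).symm
    have e2 : Dsum qb m = Dsum qa (m+1) := (hD m).2 j.isLt
    rw [e1, e2, Dsum_of_ge qa le_rfl]
    exact hsum
  constructor
  · constructor
    · intro i
      show 0 < qb i
      rcases lt_trichotomy (i:ℕ) (j:ℕ) with h' | h' | h'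
      · rw [h1 i h']; exact hpos _
      · rw [show i = j from Fin.ext h', h2]
        have hx : 0 < qa j.castSucc := hpos j.castSucc
        omega
      · rw [h3 i h']; exact hpos _
    · show ∑ i, qb i = p
      exact hsum2
  · intro A hA
    apply entries_to_VPi
    intro mm r c t hc hr
    rcases le_or_gt t (j:ℕ) with h' | h'
    · rw [(hD t).1 h'] at hc hr
      exact VPi_entries ⟨hpos, hsum⟩ hA mm r c t hc hr
    · rw [(hD t).2 h'] at hc hr
      exact VPi_entries ⟨hpos, hsum⟩ hA mm r c (t+1) hc hr

lemma easy_dir {n p : ℕ} {k k' : ℕ} {q : Fin k → ℕ} (hq : IsOrderedPartition p q)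
    {q' : Fin k' → ℕ} (hle : PartLE ⟨k, q⟩ ⟨k', q'⟩) :
    VPi n p q ⊆ VPi n p q' := by
  have key : ∀ (b : Σ kk : ℕ, Fin kk → ℕ),
      Relation.ReflTransGen IsMergeStep ⟨k, q⟩ b →
      IsOrderedPartition p b.2 ∧
        VPi n p ((⟨k, q⟩ : Σ kk : ℕ, Fin kk → ℕ)).2 ⊆ VPi n p b.2 := by
    intro b hb
    induction hb with
    | refl => exact ⟨hq, subset_rfl⟩
    | tail hsteps hstep ih =>
      obtain ⟨ihp, ihsub⟩ := ih
      obtain ⟨hp2, hsub2⟩ := merge_step_prop (n := n) (p := p) hstep ihp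
      exact ⟨hp2, ihsub.trans hsub2⟩
  exact (key ⟨k', q'⟩ hle).2

lemma GOrbit_mono {n p : ℕ} {s s' : Set (MatT n p)} (h : s ⊆ s') :
    GOrbit n p s ⊆ GOrbit n p s' := by
  rintro x ⟨g, A, hA, rfl⟩
  exact ⟨g, A, h hA, rfl⟩

end Stmt7Aux
namespace Stmt7Aux

lemma key_comb {p : ℕ} (hp : 1 ≤ p) {k' : ℕ} (q' : Fin k' → ℕ)
    (hpos' : ∀ i, 0 < q' i) (hsum' : ∑ i, q' i = p) :
    ∀ (k : ℕ) (q : Fin k → ℕ), (∀ i, 0 < q i) → (∑ i, q i = p) →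
    (∀ t ≤ k', ∃ u ≤ k, Dsum q u = Dsum q' t) →
    PartLE ⟨k, q⟩ ⟨k', q'⟩ := by
  intro k
  induction k with
  | zero =>
    intro q hpos hsum H
    exfalso
    simp at hsum
    omega
  | succ m ih =>
    intro q hpos hsum H
    have Hc : ∀ t, ∃ u, t ≤ k' → (u ≤ m + 1 ∧ Dsum q u = Dsum q' t) := by
      intro t
      by_cases ht : t ≤ k'
      · obtain ⟨u, hu1, hu2⟩ := H t ht
        exact ⟨u, fun _ => ⟨hu1, hu2⟩⟩
      · exact ⟨0, fun h => absurd h ht⟩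
    choose φ hφ using Hc
    have hφle : ∀ t, t ≤ k' → φ t ≤ m + 1 := fun t ht => (hφ t ht).1
    have hφD : ∀ t, t ≤ k' → Dsum q (φ t) = Dsum q' t := fun t ht => (hφ t ht).2
    have hφmono : ∀ t1 t2, t1 < t2 → t2 ≤ k' → φ t1 < φ t2 := by
      intro t1 t2 h12 h2
      have hD : Dsum q (φ t1) < Dsum q (φ t2) := by
        rw [hφD t1 (by omega), hφD t2 h2]
        exact Dsum_lt_of_lt hpos' h12 h2
      by_contra hcon
      have := Dsum_mono q (show φ t2 ≤ φ t1 by omega)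
      omega
    have low : ∀ t, t ≤ k' → t ≤ φ t := by
      intro t
      induction t with
      | zero => omega
      | succ a iha =>
        intro h
        have h1 := hφmono a (a+1) (by omega) h
        have h2 := iha (by omega)
        omega
    have hk'm : k' ≤ m + 1 := le_trans (low k' le_rfl) (hφle k' le_rfl)
    have hφk' : φ k' = m + 1 := by
      by_contra hcon
      have hlt : φ k' < m + 1 := lt_of_le_of_ne (hφle k' le_rfl) hcon
      have hD1 : Dsum q (φ k') = p := by
        rw [hφD k' le_rfl, Dsum_of_ge q' le_rfl, hsum']
      have hD2 := Dsum_lt_of_lt hpos hlt (le_refl (m+1))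
      rw [Dsum_of_ge q le_rfl, hsum] at hD2
      omega
    by_cases hkk : k' = m + 1
    · subst hkk
      have hupper : ∀ d t, t + d ≤ m + 1 → φ t + d ≤ φ (t + d) := by
        intro d
        induction d with
        | zero =>
          intro t _
          simp only [Nat.add_zero]
          omega
        | succ a iha =>
          intro t h
          have h1 := iha t (by omega)
          have h2 := hφmono (t+a) (t+a+1) (by omega) (by omega)
          have heq : t + (a+1) = t + a + 1 := by omega
          rw [heq]
          omega
      have hφid : ∀ t, t ≤ m + 1 → φ t = t := by
        intro t ht
        have h1 := low t ht
        have h2 := hupper (m + 1 - t) t (by omega)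
        rw [show t + (m + 1 - t) = m + 1 from by omega] at h2
        rw [hφk'] at h2
        omega
      have hqq : q = q' := by
        funext i
        have hi := i.isLt
        have e1 : Dsum q ((i:ℕ)+1) = Dsum q (i:ℕ) + q i := by
          have := Dsum_succ_of_lt q hi
          simpa using this
        have e2 : Dsum q' ((i:ℕ)+1) = Dsum q' (i:ℕ) + q' i := by
          have := Dsum_succ_of_lt q' hi
          simpa using this
        have e3 : Dsum q (i:ℕ) = Dsum q' (i:ℕ) := by
          rw [← hφD (i:ℕ) (by omega), hφid (i:ℕ) (by omega)]
        have e4 : Dsum q ((i:ℕ)+1) = Dsum q' ((i:ℕ)+1) := by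
          rw [← hφD ((i:ℕ)+1) (by omega), hφid ((i:ℕ)+1) (by omega)]
        omega
      rw [hqq]
      exact Relation.ReflTransGen.refl
    · have hgapE : ∃ t, t < k' ∧ φ t + 1 < φ (t + 1) := by
        by_contra hcon
        push_neg at hcon
        have hup : ∀ t, t ≤ k' → φ t ≤ t := by
          intro t
          induction t with
          | zero =>
            intro _
            by_contra hcon2
            have h1 : Dsum q (φ 0) = 0 := by rw [hφD 0 (by omega), Dsum_zero]
            have h2 : Dsum q 1 = Dsum q 0 + q ⟨0, by omega⟩ := Dsum_succ_of_lt q (by omega)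
            have h3 := Dsum_mono q (show 1 ≤ φ 0 by omega)
            have h4 := hpos ⟨0, by omega⟩
            have h5 := Dsum_zero q
            omega
          | succ a iha =>
            intro h
            have h1 := iha (by omega)
            have h2 := hcon a (by omega)
            omega
        have := hup k' le_rfl
        omega
      obtain ⟨t, htk', hgap⟩ := hgapE
      have hφt1 : φ (t+1) ≤ m + 1 := hφle (t+1) (by omega)
      have hjm : φ t < m := by omega
      set jF : Fin m := ⟨φ t, hjm⟩ with hjF
      have hjFval : (jF:ℕ) = φ t := rfl
      set q2 : Fin m → ℕ := mergeAt q jF with hq2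
      have hm1 : ∀ i : Fin m, (i:ℕ) < (jF:ℕ) → q2 i = q i.castSucc := by
        intro i hi
        rw [hq2]
        unfold mergeAt
        rw [if_pos hi]
      have hm2 : q2 jF = q jF.castSucc + q jF.succ := by
        rw [hq2]
        unfold mergeAt
        rw [if_neg (by omega), if_pos rfl]
      have hm3 : ∀ i : Fin m, (jF:ℕ) < (i:ℕ) → q2 i = q i.succ := by
        intro i hi
        rw [hq2]
        unfold mergeAt
        rw [if_neg (by omega), if_neg (by omega)]
      have hstep : IsMergeStep ⟨m+1, q⟩ ⟨m, q2⟩ := ⟨m, q, q2, jF, rfl, rfl, hm1, hm2, hm3⟩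
      have hD2 := Dsum_merge hm1 hm2 hm3
      have hpos2 : ∀ i, 0 < q2 i := by
        intro i
        rcases lt_trichotomy (i:ℕ) (jF:ℕ) with h' | h' | h'
        · rw [hm1 i h']; exact hpos _
        · rw [show i = jF from Fin.ext h', hm2]
          have := hpos jF.castSucc
          omega
        · rw [hm3 i h']; exact hpos _
      have hsum2 : ∑ i, q2 i = p := by
        rw [show (∑ i, q2 i) = Dsum q2 m from (Dsum_of_ge q2 le_rfl).symm,
          (hD2 m).2 jF.isLt, Dsum_of_ge q (by omega)]
        exact hsum
      have H2 : ∀ r ≤ k', ∃ u ≤ m, Dsum q2 u = Dsum q' r := by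
        intro r hr
        rcases le_or_gt r t with h' | h'
        · have hφrle : φ r ≤ φ t := by
            rcases Nat.eq_or_lt_of_le h' with he | hl
            · rw [he]
            · exact le_of_lt (hφmono r t hl (by omega))
          refine ⟨φ r, by omega, ?_⟩
          rw [(hD2 (φ r)).1 (by omega), hφD r (by omega)]
        · have hr1 : φ t + 1 < φ r := by
            rcases Nat.eq_or_lt_of_le (show t + 1 ≤ r by omega) with he | hl
            · rw [← he]; exact hgap
            · have := hφmono (t+1) r hl hr; omega
          refine ⟨φ r - 1, by have := hφle r hr; omega, ?_⟩
          rw [(hD2 (φ r - 1)).2 (by omega), show (φ r - 1) + 1 = φ r from by omega,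
            hφD r hr]
      exact Relation.ReflTransGen.head hstep (ih q2 hpos2 hsum2 H2)

end Stmt7Aux

theorem stmt7 (n p : ℕ) (hn : 2 ≤ n) (hp : 2 ≤ p) (k k' : ℕ)
    (q : Fin k → ℕ) (hq : IsOrderedPartition p q)
    (q' : Fin k' → ℕ) (hq' : IsOrderedPartition p q') :
    GOrbit n p (VPi n p q) ⊆ GOrbit n p (VPi n p q') ↔ PartLE ⟨k, q⟩ ⟨k', q'⟩ := by
  constructor
  · intro hsub
    exact Stmt7Aux.key_comb (by omega) q' hq'.1 hq'.2 k q hq.1 hq.2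
      (Stmt7Aux.hard_dir hn hq hq' hsub)
  · intro hle
    exact Stmt7Aux.GOrbit_mono (Stmt7Aux.easy_dir hq hle)
end

section
/- Let π ∈ Π(p,k), let A ∈ V_π be maximally general for π, and let σ ∈ S_k be a non-identity permutation. Then there is no g ∈ G such that A' := g·A lies in V_{σ(π)} and the diagonal σ(π)-blocks of A' satisfy B'_{i,i} = B_{σ⁻¹(i),σ⁻¹(i)} for all i = 1,…,k. -/
open Matrix MvPolynomial

open Matrix

/-- Offset of the `j`-th block, as a function of a natural number index. -/
def dOff {k : ℕ} (q : Fin k → ℕ) (j : ℕ) : ℕ :=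
  ∑ i : Fin k, if (i : ℕ) < j then q i else 0

lemma off_eq_dOff {k : ℕ} (q : Fin k → ℕ) (i : Fin k) : off q i = dOff q (i : ℕ) := by
  unfold off dOff
  exact Finset.sum_congr rfl fun j _ => if_congr Fin.lt_def rfl rfl

lemma dOff_zero {k : ℕ} (q : Fin k → ℕ) : dOff q 0 = 0 := by simp [dOff]

lemma dOff_mono {k : ℕ} (q : Fin k → ℕ) {j j' : ℕ} (h : j ≤ j') : dOff q j ≤ dOff q j' := by
  unfold dOff
  apply Finset.sum_le_sum
  intro i _
  by_cases hi : (i : ℕ) < j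
  · simp [hi, lt_of_lt_of_le hi h]
  · simp only [if_neg hi]
    split <;> simp

lemma dOff_succ {k : ℕ} (q : Fin k → ℕ) {j : ℕ} (hj : j < k) :
    dOff q (j + 1) = dOff q j + q ⟨j, hj⟩ := by
  unfold dOff
  have key : ∀ i : Fin k, (if (i : ℕ) < j + 1 then q i else 0)
      = (if (i : ℕ) < j then q i else 0) + (if i = ⟨j, hj⟩ then q i else 0) := by
    intro i
    rcases lt_trichotomy (i : ℕ) j with h | h | h
    · simp [h, Nat.lt_succ_of_lt h, Fin.ext_iff, Nat.ne_of_lt h]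
    · simp [h, Fin.ext_iff, Nat.lt_irrefl]
    · have h1 : ¬ (i : ℕ) < j + 1 := by omega
      have h2 : ¬ (i : ℕ) < j := by omega
      have h3 : ¬ (i : ℕ) = j := by omega
      simp [h1, h2, Fin.ext_iff, h3]
  rw [Finset.sum_congr rfl fun i _ => key i, Finset.sum_add_distrib,
    Finset.sum_ite_eq' Finset.univ (⟨j, hj⟩ : Fin k) q]
  simp

lemma dOff_le_sum {k : ℕ} (q : Fin k → ℕ) (j : ℕ) : dOff q j ≤ ∑ i, q i := by
  unfold dOff
  apply Finset.sum_le_sum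
  intro i _
  split <;> simp

lemma dOff_top {k : ℕ} (q : Fin k → ℕ) {j : ℕ} (h : k ≤ j) : dOff q j = ∑ i, q i := by
  unfold dOff
  exact Finset.sum_congr rfl fun i _ => by simp [lt_of_lt_of_le i.2 h]

lemma dOff_strict {p k : ℕ} {q : Fin k → ℕ} (hq : IsOrderedPartition p q) {j : ℕ}
    (hj : j < k) : dOff q j < dOff q (j + 1) := by
  rw [dOff_succ q hj]
  have := hq.1 ⟨j, hj⟩
  omega

lemma dOff_le_p {p k : ℕ} {q : Fin k → ℕ} (hq : IsOrderedPartition p q) (j : ℕ) :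
    dOff q j ≤ p := hq.2 ▸ dOff_le_sum q j

lemma dOff_k {p k : ℕ} {q : Fin k → ℕ} (hq : IsOrderedPartition p q) {j : ℕ} (h : k ≤ j) :
    dOff q j = p := hq.2 ▸ dOff_top q h

/-- The `j`-th filtration subspace: vectors supported on the first `dOff q j` coordinates. -/
noncomputable def Fsub (p : ℕ) {k : ℕ} (q : Fin k → ℕ) (j : ℕ) : Submodule ℂ (Fin p → ℂ) where
  carrier := {v | ∀ t : Fin p, dOff q j ≤ (t : ℕ) → v t = 0}
  add_mem' := fun ha hb t ht => by simp [ha t ht, hb t ht]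
  zero_mem' := fun t _ => rfl
  smul_mem' := fun c v hv t ht => by simp [hv t ht]

lemma mem_Fsub {p k : ℕ} {q : Fin k → ℕ} {j : ℕ} {v : Fin p → ℂ} :
    v ∈ Fsub p q j ↔ ∀ t : Fin p, dOff q j ≤ (t : ℕ) → v t = 0 := Iff.rfl

lemma Fsub_mono (p : ℕ) {k : ℕ} (q : Fin k → ℕ) {j j' : ℕ} (h : j ≤ j') :
    Fsub p q j ≤ Fsub p q j' := by
  intro v hv t ht
  exact hv t (le_trans (dOff_mono q h) ht)

lemma Fsub_zero (p : ℕ) {k : ℕ} (q : Fin k → ℕ) : Fsub p q 0 = ⊥ := by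
  apply le_antisymm
  · intro v hv
    have : v = 0 := funext fun t => hv t (by simp [dOff_zero])
    simp [this]
  · exact bot_le

lemma Fsub_top {p k : ℕ} {q : Fin k → ℕ} (hq : IsOrderedPartition p q) {j : ℕ} (h : k ≤ j) :
    Fsub p q j = ⊤ := by
  apply le_antisymm le_top
  intro v _ t ht
  rw [dOff_k hq h] at ht
  exact absurd t.2 (by omega)

/-- Window projection: extract `e` consecutive coordinates starting at `o`. -/
def winProjL (p o e : ℕ) : (Fin p → ℂ) →ₗ[ℂ] (Fin e → ℂ) where
  toFun v := fun a => if h : o + (a : ℕ) < p then v ⟨o + a, h⟩ else 0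
  map_add' u v := by funext a; by_cases h : o + (a : ℕ) < p <;> simp [h]
  map_smul' c v := by funext a; by_cases h : o + (a : ℕ) < p <;> simp [h]

/-- Window section: embed `e` coordinates starting at position `o`. -/
def secL (p o e : ℕ) : (Fin e → ℂ) →ₗ[ℂ] (Fin p → ℂ) where
  toFun v := fun t => if h : o ≤ (t : ℕ) ∧ (t : ℕ) < o + e
    then v ⟨(t : ℕ) - o, by omega⟩ else 0
  map_add' u v := by funext t; by_cases h : o ≤ (t : ℕ) ∧ (t : ℕ) < o + e <;> simp [h]
  map_smul' c v := by funext t; by_cases h : o ≤ (t : ℕ) ∧ (t : ℕ) < o + e <;> simp [h]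

lemma winProjL_apply {p o e : ℕ} (v : Fin p → ℂ) (a : Fin e) :
    winProjL p o e v a = if h : o + (a : ℕ) < p then v ⟨o + a, h⟩ else 0 := rfl

lemma secL_apply {p o e : ℕ} (v : Fin e → ℂ) (t : Fin p) :
    secL p o e v t = if h : o ≤ (t : ℕ) ∧ (t : ℕ) < o + e
      then v ⟨(t : ℕ) - o, by omega⟩ else 0 := rfl

lemma proj_sec {p o e : ℕ} (h : o + e ≤ p) (v : Fin e → ℂ) :
    winProjL p o e (secL p o e v) = v := by
  funext a
  have ha : o + (a : ℕ) < p := by have := a.2; omega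
  rw [winProjL_apply, dif_pos ha, secL_apply,
    dif_pos ⟨Nat.le_add_right _ _, Nat.add_lt_add_left a.2 o⟩]
  congr 1
  exact Fin.ext (by simp)

lemma secL_vanish {p o e : ℕ} (v : Fin e → ℂ) (t : Fin p) (ht : o + e ≤ (t : ℕ)) :
    secL p o e v t = 0 := by
  rw [secL_apply, dif_neg (by omega)]

/-- If `v` is supported below `dOff q j1 + e` and its window `[dOff q j1, dOff q j1 + e)`
vanishes, then `v` is supported below `dOff q j1`. -/
lemma mem_Fsub_of_proj_zero {p k : ℕ} {q : Fin k → ℕ} {j1 : ℕ} {e : ℕ} {v : Fin p → ℂ}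
    (hv : ∀ t : Fin p, dOff q j1 + e ≤ (t : ℕ) → v t = 0)
    (h0 : winProjL p (dOff q j1) e v = 0) : v ∈ Fsub p q j1 := by
  intro t ht
  by_cases htop : dOff q j1 + e ≤ (t : ℕ)
  · exact hv t htop
  · have ha : (t : ℕ) - dOff q j1 < e := by omega
    have := congrFun h0 ⟨(t : ℕ) - dOff q j1, ha⟩
    have hlt : dOff q j1 + ((t : ℕ) - dOff q j1) < p := by have := t.2; omega
    rw [winProjL_apply, dif_pos hlt, Pi.zero_apply] at this
    convert this using 2
    exact Fin.ext (by simp; omega)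

lemma proj_zero_of_mem {p k : ℕ} {q : Fin k → ℕ} {j1 : ℕ} (e : ℕ) {v : Fin p → ℂ}
    (hv : v ∈ Fsub p q j1) : winProjL p (dOff q j1) e v = 0 := by
  funext a
  rw [winProjL_apply]
  split
  · exact hv _ (Nat.le_add_right _ _)
  · rfl



open Matrix

lemma dOff_succ_fin {k : ℕ} (q : Fin k → ℕ) (i : Fin k) :
    dOff q ((i : ℕ) + 1) = dOff q (i : ℕ) + q i := by
  rw [dOff_succ q i.2]

lemma exists_block {p k : ℕ} {q : Fin k → ℕ} (hq : IsOrderedPartition p q) (t : Fin p) :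
    ∃ i : Fin k, dOff q (i : ℕ) ≤ (t : ℕ) ∧ (t : ℕ) < dOff q ((i : ℕ) + 1) := by
  have hPk : (t : ℕ) < dOff q k := by rw [dOff_k hq le_rfl]; exact t.2
  have hex : ∃ j, (t : ℕ) < dOff q j := ⟨k, hPk⟩
  have hfind : (t : ℕ) < dOff q (Nat.find hex) := Nat.find_spec hex
  have hj0pos : Nat.find hex ≠ 0 := by
    intro h
    rw [h, dOff_zero] at hfind
    omega
  have hj0k : Nat.find hex ≤ k := Nat.find_le hPk
  have hlt : Nat.find hex - 1 < k := by omega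
  refine ⟨⟨Nat.find hex - 1, hlt⟩, ?_, ?_⟩
  · show dOff q (Nat.find hex - 1) ≤ (t : ℕ)
    have hmin := Nat.find_min hex (m := Nat.find hex - 1) (by omega)
    omega
  · show (t : ℕ) < dOff q (Nat.find hex - 1 + 1)
    have heq : Nat.find hex - 1 + 1 = Nat.find hex := by omega
    rw [heq]
    exact hfind

lemma entry_zero {n p k : ℕ} {q : Fin k → ℕ} (hq : IsOrderedPartition p q) {A : MatT n p}
    (hA : A ∈ VPi n p q) (m : Fin n) (j : ℕ) (t s : Fin p)
    (hs : (s : ℕ) < dOff q j) (ht : dOff q j ≤ (t : ℕ)) : A m t s = 0 := by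
  obtain ⟨i, hi1, hi2⟩ := exists_block hq t
  obtain ⟨i', hi1', hi2'⟩ := exists_block hq s
  have hij : (i' : ℕ) < j := by
    by_contra h
    have := dOff_mono q (Nat.not_lt.mp h)
    omega
  have hji : j ≤ (i : ℕ) := by
    by_contra h
    have := dOff_mono q (show (i : ℕ) + 1 ≤ j by omega)
    omega
  have hii' : i' < i := by
    rw [Fin.lt_def]
    omega
  have hoi : off q i = dOff q (i : ℕ) := off_eq_dOff q i
  have hoi' : off q i' = dOff q (i' : ℕ) := off_eq_dOff q i'
  have hsucci := dOff_succ_fin q i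
  have hsucci' := dOff_succ_fin q i'
  have ha : (t : ℕ) - dOff q (i : ℕ) < q i := by omega
  have hb : (s : ℕ) - dOff q (i' : ℕ) < q i' := by omega
  have h0 := hA m i i' hii' ((t : ℕ) - dOff q (i : ℕ)) ((s : ℕ) - dOff q (i' : ℕ)) ha hb
  rw [blockEntry, dif_pos ⟨by have := t.2; omega, by have := s.2; omega⟩] at h0
  convert h0 using 2 <;> exact Fin.ext (by simp; omega)

/-- The filtration subspaces are invariant under a block-upper-triangular tuple. -/
lemma Fsub_inv {n p k : ℕ} {q : Fin k → ℕ} (hq : IsOrderedPartition p q) {A : MatT n p}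
    (hA : A ∈ VPi n p q) (j : ℕ) (m : Fin n) {v : Fin p → ℂ} (hv : v ∈ Fsub p q j) :
    A m *ᵥ v ∈ Fsub p q j := by
  intro t ht
  show ∑ s, A m t s * v s = 0
  apply Finset.sum_eq_zero
  intro s _
  by_cases hs : (s : ℕ) < dOff q j
  · rw [entry_zero hq hA m j t s hs ht, zero_mul]
  · rw [hv s (Nat.not_lt.mp hs), mul_zero]

/-- Window commutation. -/
lemma win_comm {n p' : ℕ} (A : MatT n p') (o e : ℕ) (hoe : o + e ≤ p')
    (hzero : ∀ (m : Fin n) (t s : Fin p'), o ≤ (t : ℕ) → (t : ℕ) < o + e →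
      (s : ℕ) < o → A m t s = 0)
    (m : Fin n) (v : Fin p' → ℂ) (hv : ∀ t : Fin p', o + e ≤ (t : ℕ) → v t = 0) :
    winProjL p' o e (A m *ᵥ v) = (subSquare A o e) m *ᵥ winProjL p' o e v := by
  funext a
  have hap : o + (a : ℕ) < p' := by have := a.2; omega
  rw [winProjL_apply, dif_pos hap]
  show ∑ s, A m ⟨o + a, hap⟩ s * v s = _
  have emb_inj : Function.Injective
      (fun b : Fin e => (⟨o + b, by have := b.2; omega⟩ : Fin p')) := by
    intro b b' hbb
    have := congrArg Fin.val hbb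
    simp at this
    exact Fin.ext this
  rw [show (∑ s, A m ⟨o + a, hap⟩ s * v s)
      = ∑ s ∈ Finset.image (fun b : Fin e => (⟨o + b, by have := b.2; omega⟩ : Fin p'))
          Finset.univ, A m ⟨o + a, hap⟩ s * v s from ?_]
  · rw [Finset.sum_image (fun b _ b' _ h => emb_inj h)]
    show _ = ∑ b, (subSquare A o e) m a b * winProjL p' o e v b
    apply Finset.sum_congr rfl
    intro b _
    have hbp : o + (b : ℕ) < p' := by have := b.2; omega
    rw [winProjL_apply, dif_pos hbp]
    congr 1
    show A m ⟨o + a, hap⟩ ⟨o + b, hbp⟩ = _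
    simp only [subSquare, Matrix.of_apply]
    rw [dif_pos ⟨hap, hbp⟩]
  · symm
    apply Finset.sum_subset (Finset.subset_univ _)
    intro s _ hs
    by_cases hso : (s : ℕ) < o
    · rw [hzero m ⟨o + a, hap⟩ s (Nat.le_add_right _ _)
        (show o + (a : ℕ) < o + e from Nat.add_lt_add_left a.2 o) hso, zero_mul]
    · by_cases hse : (s : ℕ) < o + e
      · exact absurd (Finset.mem_image.mpr
          ⟨⟨(s : ℕ) - o, by omega⟩, Finset.mem_univ _, Fin.ext (by simp; omega)⟩) hs
      · rw [hv s (by omega), mul_zero]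

/-- A diagonal `blockAt` block equals the corresponding principal submatrix (any size). -/
lemma blockAt_eq_subSquare {n p k : ℕ} (q : Fin k → ℕ) (A : MatT n p) (i : Fin k) (c : ℕ) :
    blockAt q A i i c c = subSquare A (dOff q (i : ℕ)) c := rfl

lemma subSquare_subSquare {n p : ℕ} (A : MatT n p) (o e c : ℕ) (hc : c ≤ e) :
    subSquare (subSquare A o e) 0 c = subSquare A o c := by
  funext m
  ext a b
  simp only [subSquare, Matrix.of_apply]
  have ha : 0 + (a : ℕ) < e := by have := a.2; omega
  have hb : 0 + (b : ℕ) < e := by have := b.2; omega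
  rw [dif_pos ⟨ha, hb⟩]
  by_cases h : o + (a : ℕ) < p ∧ o + (b : ℕ) < p
  · rw [dif_pos (by simpa using h), dif_pos h]
    congr 1 <;> exact Fin.ext (by simp)
  · rw [dif_neg (by simpa using h), dif_neg h]



open Matrix

lemma invSup8 {n p : ℕ} {A : MatT n p} {U V : Submodule ℂ (Fin p → ℂ)}
    (hU : ∀ (m : Fin n), ∀ v ∈ U, A m *ᵥ v ∈ U)
    (hV : ∀ (m : Fin n), ∀ v ∈ V, A m *ᵥ v ∈ V) :
    ∀ (m : Fin n), ∀ v ∈ U ⊔ V, A m *ᵥ v ∈ U ⊔ V := by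
  intro m v hv
  obtain ⟨u, hu, w, hw, rfl⟩ := Submodule.mem_sup.mp hv
  rw [Matrix.mulVec_add]
  exact Submodule.add_mem_sup (hU m u hu) (hV m w hw)

lemma invInf8 {n p : ℕ} {A : MatT n p} {U V : Submodule ℂ (Fin p → ℂ)}
    (hU : ∀ (m : Fin n), ∀ v ∈ U, A m *ᵥ v ∈ U)
    (hV : ∀ (m : Fin n), ∀ v ∈ V, A m *ᵥ v ∈ V) :
    ∀ (m : Fin n), ∀ v ∈ U ⊓ V, A m *ᵥ v ∈ U ⊓ V :=
  fun m v hv => ⟨hU m v hv.1, hV m v hv.2⟩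

/-- Classification of invariant subspaces of a maximally general block upper
triangular tuple: they are exactly the filtration subspaces. -/
lemma classify {n p k : ℕ} {q : Fin k → ℕ} (hq : IsOrderedPartition p q) {A : MatT n p}
    (hA : MaxGeneral n p q A) (W : Submodule ℂ (Fin p → ℂ))
    (hW : ∀ (m : Fin n), ∀ v ∈ W, A m *ᵥ v ∈ W) :
    ∃ j ≤ k, W = Fsub p q j := by
  classical
  obtain ⟨hAV, hsimp, _, hindec⟩ := hA
  have htop : W ≤ Fsub p q k := by rw [Fsub_top hq le_rfl]; exact le_top
  have hex : ∃ j, W ≤ Fsub p q j := ⟨k, htop⟩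
  have hWj : W ≤ Fsub p q (Nat.find hex) := Nat.find_spec hex
  have hjk : Nat.find hex ≤ k := Nat.find_le htop
  refine ⟨Nat.find hex, hjk, ?_⟩
  rcases Nat.eq_zero_or_pos (Nat.find hex) with hj0 | hjpos
  · rw [hj0, Fsub_zero] at hWj ⊢
    exact le_bot_iff.mp hWj
  -- j = t + 1
  set t := Nat.find hex - 1 with htdef
  have htj : Nat.find hex = t + 1 := by omega
  have htk : t < k := by omega
  rw [htj] at hWj ⊢
  have hnotless : ¬ W ≤ Fsub p q t := by
    have := Nat.find_min hex (m := t) (by omega)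
    exact this
  -- generic window facts
  have hzero_gen : ∀ (r : ℕ), ∀ (m : Fin n) (t' s' : Fin p), dOff q r ≤ (t' : ℕ) →
      (t' : ℕ) < dOff q r + 1000000 → (s' : ℕ) < dOff q r → A m t' s' = 0 :=
    fun r m t' s' h1 _ h3 => entry_zero hq hAV m r t' s' h3 h1
  -- Step A : W ⊔ F t = F (t+1)
  have hd1 : dOff q (t + 1) = dOff q t + q ⟨t, htk⟩ := dOff_succ q htk
  have hoe1 : dOff q t + q ⟨t, htk⟩ ≤ p := hd1 ▸ dOff_le_p hq (t + 1)
  have hsupp1 : ∀ v ∈ Fsub p q (t + 1), ∀ t' : Fin p,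
      dOff q t + q ⟨t, htk⟩ ≤ (t' : ℕ) → v t' = 0 := by
    intro v hv t' ht'
    exact hv t' (hd1 ▸ ht')
  have hcomm1 : ∀ (m : Fin n), ∀ v ∈ Fsub p q (t + 1),
      winProjL p (dOff q t) (q ⟨t, htk⟩) (A m *ᵥ v)
        = (subSquare A (dOff q t) (q ⟨t, htk⟩)) m *ᵥ
          winProjL p (dOff q t) (q ⟨t, htk⟩) v := by
    intro m v hv
    exact win_comm A (dOff q t) (q ⟨t, htk⟩) hoe1
      (fun m t' s' h1 _ h3 => entry_zero hq hAV m t t' s' h3 h1) m v (hsupp1 v hv)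
  have hZcases : Submodule.map (winProjL p (dOff q t) (q ⟨t, htk⟩)) W = ⊥ ∨
      Submodule.map (winProjL p (dOff q t) (q ⟨t, htk⟩)) W = ⊤ := by
    apply hsimp ⟨t, htk⟩
    rintro m v hv
    obtain ⟨w, hw, rfl⟩ := Submodule.mem_map.mp hv
    rw [show (blockAt q A ⟨t, htk⟩ ⟨t, htk⟩ (q ⟨t, htk⟩) (q ⟨t, htk⟩)) m
        = (subSquare A (dOff q t) (q ⟨t, htk⟩)) m from rfl, ← hcomm1 m w (hWj hw)]
    exact Submodule.mem_map_of_mem (hW m w hw)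
  have hZtop : Submodule.map (winProjL p (dOff q t) (q ⟨t, htk⟩)) W = ⊤ := by
    rcases hZcases with h | h
    · exfalso
      apply hnotless
      intro v hv
      apply mem_Fsub_of_proj_zero (e := q ⟨t, htk⟩) (hsupp1 v (hWj hv))
      have : winProjL p (dOff q t) (q ⟨t, htk⟩) v ∈ (⊥ : Submodule ℂ _) :=
        h ▸ Submodule.mem_map_of_mem hv
      simpa using this
    · exact h
  have hstepA : W ⊔ Fsub p q t = Fsub p q (t + 1) := by
    apply le_antisymm (sup_le hWj (Fsub_mono p q (Nat.le_succ t)))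
    intro u hu
    have : winProjL p (dOff q t) (q ⟨t, htk⟩) u ∈ (⊤ : Submodule ℂ _) := trivial
    rw [← hZtop] at this
    obtain ⟨w, hw, hwu⟩ := Submodule.mem_map.mp this
    have hsub : u - w ∈ Fsub p q t := by
      apply mem_Fsub_of_proj_zero (e := q ⟨t, htk⟩)
        (hsupp1 _ (Submodule.sub_mem _ hu (hWj hw)))
      rw [map_sub, hwu, sub_self]
    have : u = w + (u - w) := by ring
    rw [this]
    exact Submodule.add_mem_sup hw hsub
  -- Step B : descent
  have key : ∀ s : ℕ, s ≤ t → W ⊔ Fsub p q (t - s) = Fsub p q (t + 1) := by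
    intro s
    induction s with
    | zero => intro _; simpa using hstepA
    | succ s ih =>
      intro hs1
      have IH := ih (by omega)
      set r := t - (s + 1) with hrdef
      have hrs : t - s = r + 1 := by omega
      rw [hrs] at IH
      have hr1k : r + 1 < k := by omega
      have hrk : r < k := by omega
      set rfin : Fin k := ⟨r, hrk⟩ with hrfin
      set c1 := q rfin with hc1
      set c2 := q ⟨r + 1, hr1k⟩ with hc2
      set e := c1 + c2 with hedef
      set o := dOff q r with hodef
      have hdr1 : dOff q (r + 1) = o + c1 := dOff_succ q hrk
      have hdr2 : dOff q (r + 2) = o + e := by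
        rw [show r + 2 = (r + 1) + 1 from rfl, dOff_succ q hr1k, hdr1, hedef, hc2]
        ring
      have hoe : o + e ≤ p := hdr2 ▸ dOff_le_p hq (r + 2)
      have hsupp2 : ∀ v ∈ Fsub p q (r + 2), ∀ t' : Fin p, o + e ≤ (t' : ℕ) → v t' = 0 :=
        fun v hv t' ht' => hv t' (hdr2 ▸ ht')
      set ρ := winProjL p o e with hρ
      set C := subSquare A o e with hC
      have hcomm : ∀ (m : Fin n), ∀ v ∈ Fsub p q (r + 2),
          ρ (A m *ᵥ v) = C m *ᵥ ρ v := by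
        intro m v hv
        exact win_comm A o e hoe
          (fun m t' s' h1 _ h3 => entry_zero hq hAV m r t' s' h3 h1) m v (hsupp2 v hv)
      set X := (W ⊔ Fsub p q r) ⊓ Fsub p q (r + 2) with hX
      have hXinv : ∀ (m : Fin n), ∀ v ∈ X, A m *ᵥ v ∈ X :=
        invInf8 (invSup8 hW (fun m v hv => Fsub_inv hq hAV r m hv))
          (fun m v hv => Fsub_inv hq hAV (r + 2) m hv)
      have hXle : X ≤ Fsub p q (r + 2) := inf_le_right
      set Wb := Submodule.map ρ X with hWb
      set Sb := Submodule.map ρ (Fsub p q (r + 1)) with hSb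
      have hFr12 : Fsub p q (r + 1) ≤ Fsub p q (r + 2) := Fsub_mono p q (by omega)
      have hWbinv : ∀ (m : Fin n), ∀ z ∈ Wb, C m *ᵥ z ∈ Wb := by
        rintro m z hz
        obtain ⟨x, hx, rfl⟩ := Submodule.mem_map.mp hz
        rw [← hcomm m x (hXle hx)]
        exact Submodule.mem_map_of_mem (hXinv m x hx)
      have hSbinv : ∀ (m : Fin n), ∀ z ∈ Sb, C m *ᵥ z ∈ Sb := by
        rintro m z hz
        obtain ⟨x, hx, rfl⟩ := Submodule.mem_map.mp hz
        rw [← hcomm m x (hFr12 hx)]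
        exact Submodule.mem_map_of_mem (Fsub_inv hq hAV (r + 1) m hx)
      have hSbsub : ∀ z ∈ Sb, ∀ b : Fin e, c1 ≤ (b : ℕ) → z b = 0 := by
        rintro z hz b hb
        obtain ⟨x, hx, rfl⟩ := Submodule.mem_map.mp hz
        rw [winProjL_apply]
        split
        · exact hx _ (by simp only [Fin.val_mk]; omega)
        · rfl
      by_cases hcase : Sb ≤ Wb
      · -- conclude the step
        have hFr1 : Fsub p q (r + 1) ≤ W ⊔ Fsub p q r := by
          intro u hu
          have : ρ u ∈ Wb := hcase (Submodule.mem_map_of_mem hu)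
          obtain ⟨x, hx, hxu⟩ := Submodule.mem_map.mp this
          have hsub : u - x ∈ Fsub p q r := by
            apply mem_Fsub_of_proj_zero (e := e)
              (hsupp2 _ (Submodule.sub_mem _ (hFr12 hu) (hXle hx)))
            rw [map_sub, hxu, sub_self]
          have : u = x + (u - x) := by ring
          rw [this]
          exact Submodule.add_mem _ (hx.1) (le_sup_right (a := W) hsub)
        apply le_antisymm (sup_le hWj (Fsub_mono p q (by omega)))
        rw [← IH]
        exact sup_le le_sup_left (le_trans hFr1 (sup_le le_sup_left le_sup_right))
      · exfalso
        set φ := winProjL e 0 c1 with hφ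
        have hc1e : c1 ≤ e := by omega
        have hBeq : subSquare C 0 c1 = subSquare A o c1 := subSquare_subSquare A o e c1 hc1e
        set Z := Sb ⊓ Wb with hZ
        have hZc1 : ∀ z ∈ Z, ∀ b : Fin e, c1 ≤ (b : ℕ) → z b = 0 :=
          fun z hz => hSbsub z hz.1
        have hφcomm : ∀ (m : Fin n), ∀ z ∈ Z,
            φ (C m *ᵥ z) = (subSquare A o c1) m *ᵥ φ z := by
          intro m z hz
          rw [← hBeq]
          exact win_comm C 0 c1 (by omega) (fun _ _ s' _ _ h3 => absurd h3 (by omega))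
            m z (fun t' ht' => hZc1 z hz t' (by omega))
        have hZinv : ∀ (m : Fin n), ∀ z ∈ Z, C m *ᵥ z ∈ Z :=
          invInf8 hSbinv hWbinv
        have hZ''cases : Submodule.map φ Z = ⊥ ∨ Submodule.map φ Z = ⊤ := by
          apply hsimp rfin
          rintro m z hz
          obtain ⟨x, hx, rfl⟩ := Submodule.mem_map.mp hz
          rw [show (blockAt q A rfin rfin (q rfin) (q rfin)) m
              = (subSquare A o c1) m from rfl, ← hφcomm m x hx]
          exact Submodule.mem_map_of_mem (hZinv m x hx)
        -- in either case we will contradict something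
        have hφeval : ∀ (z : Fin e → ℂ) (b : Fin e) (hb : (b : ℕ) < c1),
            φ z ⟨(b : ℕ), hb⟩ = z b := by
          intro z b hb
          rw [winProjL_apply, dif_pos (by simp only [Fin.val_mk]; omega)]
          congr 1
          exact Fin.ext (by simp)
        have hZbot : Z = ⊥ := by
          rcases hZ''cases with h | h
          · apply le_bot_iff.mp
            intro z hz
            have hzb : ∀ b : Fin e, z b = 0 := by
              intro b
              by_cases hb : (b : ℕ) < c1
              · have : φ z ∈ (⊥ : Submodule ℂ _) := h ▸ Submodule.mem_map_of_mem hz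
                rw [Submodule.mem_bot] at this
                rw [← hφeval z b hb, this]
                rfl
              · exact hZc1 z hz b (by omega)
            simpa using (funext hzb : z = 0)
          · exfalso
            apply hcase
            intro u hu
            have : φ u ∈ Submodule.map φ Z := h ▸ trivial
            obtain ⟨z, hz, hzu⟩ := Submodule.mem_map.mp this
            have : z = u := by
              funext b
              by_cases hb : (b : ℕ) < c1
              · rw [← hφeval z b hb, ← hφeval u b hb, hzu]
              · rw [hZc1 z hz b (by omega), hSbsub u hu b (by omega)]
            exact this ▸ hz.2
        -- sup is everything
        have hsum : Fsub p q (r + 1) ⊔ X = Fsub p q (r + 2) := by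
          apply le_antisymm (sup_le hFr12 hXle)
          intro u hu
          have hu1 : u ∈ Fsub p q (t + 1) := Fsub_mono p q (by omega) hu
          rw [← IH] at hu1
          obtain ⟨w, hw, f, hf, rfl⟩ := Submodule.mem_sup.mp hu1
          have hwX : w ∈ X := by
            refine ⟨le_sup_left (a := W) (b := Fsub p q r) hw, ?_⟩
            have : w = (w + f) - f := by ring
            rw [this]
            exact Submodule.sub_mem _ hu (hFr12 hf)
          rw [show w + f = f + w from by ring]
          exact Submodule.add_mem_sup hf hwX
        have hsup : Sb ⊔ Wb = ⊤ := by
          rw [hSb, hWb, ← Submodule.map_sup, hsum]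
          apply le_antisymm le_top
          intro z _
          refine Submodule.mem_map.mpr ⟨secL p o e z, ?_, proj_sec hoe z⟩
          intro t' ht'
          exact secL_vanish z t' (by omega)
        have hc1pos : 0 < c1 := hq.1 rfin
        have hc2pos : 0 < c2 := hq.1 ⟨r + 1, hr1k⟩
        have hepos : 0 < e := by omega
        have hSbne : Sb ≠ ⊥ := by
          intro hbot
          have hmem : Pi.single (⟨0, hepos⟩ : Fin e) (1 : ℂ) ∈ Sb := by
            refine Submodule.mem_map.mpr ⟨secL p o e (Pi.single ⟨0, hepos⟩ 1), ?_,
              proj_sec hoe _⟩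
            intro t' ht'
            by_cases htop' : o + e ≤ (t' : ℕ)
            · exact secL_vanish _ t' htop'
            · rw [secL_apply, dif_pos ⟨by omega, by omega⟩]
              apply Pi.single_eq_of_ne
              intro hcontra
              have := congrArg Fin.val hcontra
              simp only [Fin.val_mk] at this
              omega
          rw [hbot, Submodule.mem_bot] at hmem
          have := congrFun hmem ⟨0, hepos⟩
          simp at this
        have hWbne : Wb ≠ ⊥ := by
          intro hbot
          rw [hbot, sup_bot_eq] at hsup
          have hc1lt : c1 < e := by omega
          have hmem : Pi.single (⟨c1, hc1lt⟩ : Fin e) (1 : ℂ) ∈ Sb := hsup ▸ trivial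
          have := hSbsub _ hmem ⟨c1, hc1lt⟩ (by simp)
          simp at this
        -- decomposability contradiction
        have heind : (rfin : ℕ) + 1 < k := hr1k
        apply hindec rfin heind
        refine ⟨Sb, Wb, hSbne, hWbne, ⟨disjoint_iff.mpr hZbot, codisjoint_iff.mpr hsup⟩,
          ?_, ?_⟩
        · exact fun m v hv => hSbinv m v hv
        · exact fun m v hv => hWbinv m v hv
  have := key t le_rfl
  rw [Nat.sub_self, Fsub_zero, sup_bot_eq] at this
  exact this



open Matrix

lemma mulVec_ext {c : ℕ} {M N : Matrix (Fin c) (Fin c) ℂ}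
    (h : ∀ v, M *ᵥ v = N *ᵥ v) : M = N := by
  ext i j
  have := congrFun (h (Pi.single j 1)) i
  simpa [Matrix.mulVec_single] using this

lemma exists_Fsub_mem {p k : ℕ} {q : Fin k → ℕ} (hq : IsOrderedPartition p q) {a b : ℕ}
    (hb : b < a) (hak : a ≤ k) :
    ∃ v, v ∈ Fsub p q a ∧ v ∉ Fsub p q b := by
  have hbk : b < k := by omega
  have h1 : dOff q b < dOff q (b + 1) := dOff_strict hq hbk
  have h2 : dOff q (b + 1) ≤ dOff q a := dOff_mono q (by omega)
  have h3 : dOff q b < p := by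
    have := dOff_le_p hq a
    omega
  refine ⟨Pi.single ⟨dOff q b, h3⟩ 1, ?_, ?_⟩
  · intro t ht
    apply Pi.single_eq_of_ne
    intro hcontra
    have := congrArg Fin.val hcontra
    simp only [Fin.val_mk] at this
    omega
  · intro hmem
    have := hmem ⟨dOff q b, h3⟩ (by simp)
    simp at this

lemma Fsub_index {p k : ℕ} {q : Fin k → ℕ} (hq : IsOrderedPartition p q) {a b : ℕ}
    (hak : a ≤ k) (h : Fsub p q a ≤ Fsub p q b) : a ≤ b := by
  by_contra hab
  obtain ⟨v, hv1, hv2⟩ := exists_Fsub_mem hq (by omega : b < a) hak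
  exact hv2 (h hv1)

lemma finrank_Fsub {p k : ℕ} {q : Fin k → ℕ} (j : ℕ) (hdp : dOff q j ≤ p) :
    Module.finrank ℂ (Fsub p q j) = dOff q j := by
  set f : (Fsub p q j) →ₗ[ℂ] (Fin (dOff q j) → ℂ) :=
    (winProjL p 0 (dOff q j)).comp (Fsub p q j).subtype with hf
  have hinj : Function.Injective f := by
    intro x y hxy
    apply Subtype.ext
    funext t
    by_cases ht : (t : ℕ) < dOff q j
    · have hx := congrFun hxy ⟨(t : ℕ), ht⟩
      simp only [hf, LinearMap.comp_apply, Submodule.subtype_apply] at hx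
      rw [winProjL_apply, winProjL_apply] at hx
      have h0t : 0 + (t : ℕ) < p := by have := t.2; omega
      rw [dif_pos h0t, dif_pos h0t] at hx
      have : (⟨0 + (t : ℕ), h0t⟩ : Fin p) = t := Fin.ext (by simp)
      rwa [this] at hx
    · rw [x.2 t (by omega), y.2 t (by omega)]
  have hsurj : Function.Surjective f := by
    intro w
    refine ⟨⟨secL p 0 (dOff q j) w, fun t ht => secL_vanish w t (by omega)⟩, ?_⟩
    show winProjL p 0 (dOff q j) (secL p 0 (dOff q j) w) = w
    exact proj_sec (by omega) w
  rw [LinearEquiv.finrank_eq (LinearEquiv.ofBijective f ⟨hinj, hsurj⟩)]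
  exact Module.finrank_fin_fun ℂ


theorem stmt8 (n p : ℕ) (hn : 2 ≤ n) (hp : 2 ≤ p) (k : ℕ) (q : Fin k → ℕ)
    (hq : IsOrderedPartition p q) (A : MatT n p) (hA : MaxGeneral n p q A)
    (σ : Equiv.Perm (Fin k)) (hσ : σ ≠ 1) :
    ¬ ∃ g : Matrix.GeneralLinearGroup (Fin p) ℂ,
        gconj g A ∈ VPi n p (permutePart σ q) ∧
        ∀ i : Fin k,
          blockAt (permutePart σ q) (gconj g A) (σ i) (σ i) (q i) (q i) =
            blockAt q A i i (q i) (q i) := by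
  classical
  rintro ⟨g, hV', hBlocks⟩
  obtain ⟨i₀, hi₀⟩ : ∃ i, σ i ≠ i := by
    by_contra h
    push_neg at h
    exact hσ (Equiv.ext fun x => (h x).trans rfl)
  have hAV := hA.1
  set q' : Fin k → ℕ := permutePart σ q with hq'def
  have hq' : IsOrderedPartition p q' := by
    refine ⟨fun i => hq.1 _, ?_⟩
    rw [← hq.2]
    exact Equiv.sum_comp σ.symm q
  set A' : MatT n p := gconj g A with hA'def
  set gm : Matrix (Fin p) (Fin p) ℂ := ↑g with hgm
  set gmi : Matrix (Fin p) (Fin p) ℂ := ↑(g⁻¹) with hgmi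
  have hgg : gm * gmi = 1 := g.mul_inv
  have hgig : gmi * gm = 1 := g.inv_mul
  have hconj : ∀ (m : Fin n) (v : Fin p → ℂ),
      gm *ᵥ (A m *ᵥ v) = A' m *ᵥ (gm *ᵥ v) := by
    intro m v
    show gm *ᵥ (A m *ᵥ v) = (gm * A m * gmi) *ᵥ (gm *ᵥ v)
    rw [Matrix.mulVec_mulVec, Matrix.mulVec_mulVec, Matrix.mul_assoc (gm * A m) gmi gm,
      hgig, Matrix.mul_one]
  have hgmiv : ∀ v : Fin p → ℂ, gm *ᵥ (gmi *ᵥ v) = v := by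
    intro v
    rw [Matrix.mulVec_mulVec, hgg, Matrix.one_mulVec]
  have hgmiv' : ∀ v : Fin p → ℂ, gmi *ᵥ (gm *ᵥ v) = v := by
    intro v
    rw [Matrix.mulVec_mulVec, hgig, Matrix.one_mulVec]
  set gl : (Fin p → ℂ) →ₗ[ℂ] (Fin p → ℂ) := Matrix.mulVecLin gm with hgl
  have hglapp : ∀ v, gl v = gm *ᵥ v := fun v => rfl
  have hglinj : Function.Injective gl := by
    intro v w hvw
    have := congrArg (fun x => gmi *ᵥ x) hvw
    simpa [hglapp, hgmiv'] using this
  have hglsurj : Function.Surjective gl := fun v => ⟨gmi *ᵥ v, hgmiv v⟩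
  -- the pulled-back filtration
  set G : ℕ → Submodule ℂ (Fin p → ℂ) := fun j => (Fsub p q' j).comap gl with hGdef
  have hGmem : ∀ (j : ℕ) (v : Fin p → ℂ), v ∈ G j ↔ gm *ᵥ v ∈ Fsub p q' j :=
    fun j v => Iff.rfl
  have hGinv : ∀ (j : ℕ) (m : Fin n), ∀ v ∈ G j, A m *ᵥ v ∈ G j := by
    intro j m v hv
    rw [hGmem, hconj]
    exact Fsub_inv hq' hV' j m ((hGmem j v).mp hv)
  have hGclass : ∀ j : ℕ, ∃ j' ≤ k, G j = Fsub p q j' :=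
    fun j => classify hq hA (G j) (hGinv j)
  choose mf hmfk hmf using hGclass
  -- mf is strictly monotone on {0,…,k}
  have hmono : ∀ {j j' : ℕ}, j < j' → j' ≤ k → mf j < mf j' := by
    intro j j' hjj hj'k
    obtain ⟨w, hw1, hw2⟩ := exists_Fsub_mem hq' hjj hj'k
    have hv1 : gmi *ᵥ w ∈ G j' := by rw [hGmem, hgmiv]; exact hw1
    have hv2 : gmi *ᵥ w ∉ G j := by rw [hGmem, hgmiv]; exact hw2
    rw [hmf j'] at hv1
    rw [hmf j] at hv2
    by_contra hle
    exact hv2 (Fsub_mono p q (by omega) hv1)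
  have hlb : ∀ j ≤ k, j ≤ mf j := by
    intro j
    induction j with
    | zero => omega
    | succ j ih =>
      intro hjk
      have := hmono (show j < j + 1 by omega) hjk
      have := ih (by omega)
      omega
  have hub : ∀ s ≤ k, mf (k - s) ≤ k - s := by
    intro s
    induction s with
    | zero => intro _; simpa using hmfk k
    | succ s ih =>
      intro hsk
      have h1 := ih (by omega)
      have h2 : k - (s + 1) < k - s := by omega
      have := hmono h2 (by omega)
      omega
  have hmfid : ∀ j ≤ k, mf j = j := by
    intro j hjk
    have h1 := hlb j hjk
    have h2 := hub (k - j) (by omega)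
    have : k - (k - j) = j := by omega
    rw [this] at h2
    omega
  have hGF : ∀ j ≤ k, G j = Fsub p q j := by
    intro j hjk
    rw [hmf j, hmfid j hjk]
  -- dimensions agree
  have hdd : ∀ j ≤ k, dOff q' j = dOff q j := by
    intro j hjk
    have hmapG : Submodule.map gl (G j) = Fsub p q' j :=
      Submodule.map_comap_eq_of_surjective hglsurj _
    have e1 := Submodule.equivMapOfInjective gl hglinj (G j)
    rw [hmapG] at e1
    have h1 : Module.finrank ℂ (G j) = Module.finrank ℂ (Fsub p q' j) :=
      e1.finrank_eq
    have h2 : Module.finrank ℂ (G j) = Module.finrank ℂ (Fsub p q j) := by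
      rw [hGF j hjk]
    rw [finrank_Fsub j (dOff_le_p hq j), finrank_Fsub j (dOff_le_p hq' j)] at *
    omega
  have hqq : ∀ i : Fin k, q' i = q i := by
    intro i
    have h1 := dOff_succ_fin q i
    have h2 := dOff_succ_fin q' i
    have h3 := hdd (i : ℕ) (by omega)
    have h4 := hdd ((i : ℕ) + 1) i.2
    omega
  -- the block isomorphism
  set j : Fin k := σ i₀ with hjdef
  set c : ℕ := q i₀ with hcdef
  have hq'j : q' j = c := by
    show q (σ.symm (σ i₀)) = q i₀
    rw [Equiv.symm_apply_apply]
  have hqj : q j = c := by rw [← hqq j, hq'j]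
  set o : ℕ := dOff q (j : ℕ) with hodef
  set o' : ℕ := dOff q' (j : ℕ) with ho'def
  have hdo : dOff q ((j : ℕ) + 1) = o + c := by rw [dOff_succ_fin q j, hqj]
  have hdo' : dOff q' ((j : ℕ) + 1) = o' + c := by rw [dOff_succ_fin q' j, hq'j]
  have hocp : o + c ≤ p := hdo ▸ dOff_le_p hq _
  have ho'cp : o' + c ≤ p := hdo' ▸ dOff_le_p hq' _
  set T1 : MatT n c := subSquare A o c with hT1def
  set T2 : MatT n c := subSquare A' o' c with hT2def
  have hT2 : T2 = blockAt q A i₀ i₀ (q i₀) (q i₀) := hBlocks i₀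
  set ψ : (Fin c → ℂ) →ₗ[ℂ] (Fin c → ℂ) :=
    (winProjL p o' c).comp (gl.comp (secL p o c)) with hψdef
  have hψapp : ∀ v, ψ v = winProjL p o' c (gm *ᵥ (secL p o c v)) := fun v => rfl
  have hkey : ∀ (m : Fin n) (v : Fin c → ℂ), ψ (T1 m *ᵥ v) = T2 m *ᵥ ψ v := by
    intro m v
    set u : Fin p → ℂ := secL p o c v with hudef
    have husupp : ∀ t' : Fin p, o + c ≤ (t' : ℕ) → u t' = 0 := fun t' ht' =>
      secL_vanish v t' ht'
    have hu1 : u ∈ Fsub p q ((j : ℕ) + 1) := fun t' ht' => husupp t' (hdo ▸ ht')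
    have hprojU : winProjL p o c u = v := proj_sec hocp v
    have hw : A m *ᵥ u ∈ Fsub p q ((j : ℕ) + 1) := Fsub_inv hq hAV _ m hu1
    have hprojW : winProjL p o c (A m *ᵥ u) = T1 m *ᵥ v := by
      rw [win_comm A o c hocp
        (fun m t' s' h1 _ h3 => entry_zero hq hAV m (j : ℕ) t' s' h3 h1) m u husupp,
        hprojU]
    have hdiff : secL p o c (T1 m *ᵥ v) - A m *ᵥ u ∈ Fsub p q (j : ℕ) := by
      apply mem_Fsub_of_proj_zero (e := c)
      · intro t' ht'
        have h1 : secL p o c (T1 m *ᵥ v) t' = 0 := secL_vanish _ t' ht'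
        have h2 : (A m *ᵥ u) t' = 0 := hw t' (by omega)
        simp [h1, h2]
      · rw [map_sub, proj_sec hocp, hprojW, sub_self]
    have hsplit : ψ (T1 m *ᵥ v)
        = winProjL p o' c (gm *ᵥ (A m *ᵥ u))
          + winProjL p o' c (gm *ᵥ (secL p o c (T1 m *ᵥ v) - A m *ᵥ u)) := by
      rw [hψapp]
      rw [show gm *ᵥ (secL p o c (T1 m *ᵥ v))
          = gm *ᵥ (A m *ᵥ u) + gm *ᵥ (secL p o c (T1 m *ᵥ v) - A m *ᵥ u) from by
        rw [← Matrix.mulVec_add]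
        congr 1
        ring]
      rw [map_add]
    have hzero2 : winProjL p o' c (gm *ᵥ (secL p o c (T1 m *ᵥ v) - A m *ᵥ u)) = 0 := by
      apply proj_zero_of_mem
      have : secL p o c (T1 m *ᵥ v) - A m *ᵥ u ∈ G (j : ℕ) := by
        rw [hGF (j : ℕ) (by omega)]
        exact hdiff
      exact (hGmem _ _).mp this
    have hgu : gm *ᵥ u ∈ Fsub p q' ((j : ℕ) + 1) := by
      have : u ∈ G ((j : ℕ) + 1) := by
        rw [hGF ((j : ℕ) + 1) j.2]
        exact hu1
      exact (hGmem _ _).mp this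
    have hguA : gm *ᵥ (A m *ᵥ u) = A' m *ᵥ (gm *ᵥ u) := hconj m _
    have hfinale : winProjL p o' c (A' m *ᵥ (gm *ᵥ u))
        = T2 m *ᵥ winProjL p o' c (gm *ᵥ u) := by
      exact win_comm A' o' c ho'cp
        (fun m t' s' h1 _ h3 => entry_zero hq' hV' m (j : ℕ) t' s' h3 h1) m _
        (fun t' ht' => hgu t' (hdo' ▸ ht'))
    rw [hsplit, hzero2, add_zero, hguA, hfinale, hψapp]
  have hinj : Function.Injective ψ := by
    rw [← LinearMap.ker_eq_bot]
    apply le_bot_iff.mp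
    intro v hv
    rw [LinearMap.mem_ker] at hv
    set u : Fin p → ℂ := secL p o c v with hudef
    have hu1 : u ∈ Fsub p q ((j : ℕ) + 1) := fun t' ht' =>
      secL_vanish v t' (hdo ▸ ht')
    have hgu : gm *ᵥ u ∈ Fsub p q' ((j : ℕ) + 1) := by
      have : u ∈ G ((j : ℕ) + 1) := by
        rw [hGF ((j : ℕ) + 1) j.2]
        exact hu1
      exact (hGmem _ _).mp this
    have hguj : gm *ᵥ u ∈ Fsub p q' (j : ℕ) := by
      apply mem_Fsub_of_proj_zero (e := c) (fun t' ht' => hgu t' (hdo' ▸ ht'))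
      exact hv
    have huj : u ∈ Fsub p q (j : ℕ) := by
      have : u ∈ G (j : ℕ) := (hGmem _ _).mpr hguj
      rwa [hGF (j : ℕ) (by omega)] at this
    have : winProjL p o c u = 0 := proj_zero_of_mem c huj
    rw [Submodule.mem_bot, ← proj_sec hocp v]
    exact this
  have hsurj : Function.Surjective ψ := (LinearMap.injective_iff_surjective).mp hinj
  set ψe : (Fin c → ℂ) ≃ₗ[ℂ] (Fin c → ℂ) := LinearEquiv.ofBijective ψ ⟨hinj, hsurj⟩
    with hψe
  set Um : Matrix (Fin c) (Fin c) ℂ := LinearMap.toMatrix' ψ with hUm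
  set Vm : Matrix (Fin c) (Fin c) ℂ :=
    LinearMap.toMatrix' (ψe.symm : (Fin c → ℂ) →ₗ[ℂ] (Fin c → ℂ)) with hVm
  have hUV : Um * Vm = 1 := by
    rw [hUm, hVm, ← LinearMap.toMatrix'_comp, ← LinearMap.toMatrix'_id (R := ℂ) (n := Fin c)]
    congr 1
    ext v
    simp [hψe]
    exact congrFun (LinearEquiv.apply_ofBijective_symm_apply ψ _) _
  have hVU : Vm * Um = 1 := by
    rw [hUm, hVm, ← LinearMap.toMatrix'_comp, ← LinearMap.toMatrix'_id (R := ℂ) (n := Fin c)]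
    congr 1
    ext v
    simp [hψe]
    exact congrFun (LinearEquiv.ofBijective_symm_apply_apply ψ _) _
  have hUmv : ∀ v, Um *ᵥ v = ψ v := by
    intro v
    rw [hUm, ← Matrix.toLin'_apply, Matrix.toLin'_toMatrix']
  set hGL : Matrix.GeneralLinearGroup (Fin c) ℂ := ⟨Um, Vm, hUV, hVU⟩ with hGLdef
  have hmat : ∀ m : Fin n, Um * T1 m = T2 m * Um := by
    intro m
    apply mulVec_ext
    intro v
    rw [← Matrix.mulVec_mulVec, ← Matrix.mulVec_mulVec, hUmv, hUmv, hkey]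
  have hcast : castTuple hqj (blockAt q A j j (q j) (q j)) = T1 := by
    funext m
    ext a b
    show blockAt q A j j (q j) (q j) m (Fin.cast hqj.symm a) (Fin.cast hqj.symm b)
      = T1 m a b
    rw [show T1 m a b = blockEntry q A m j j (a : ℕ) (b : ℕ) from rfl]
    rw [show blockAt q A j j (q j) (q j) m (Fin.cast hqj.symm a) (Fin.cast hqj.symm b)
      = blockEntry q A m j j ((Fin.cast hqj.symm a : Fin (q j)) : ℕ)
        ((Fin.cast hqj.symm b : Fin (q j)) : ℕ) from rfl]
    simp
  have hiso : TupleIso (blockAt q A j j (q j) (q j)) (blockAt q A i₀ i₀ (q i₀) (q i₀)) := by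
    refine ⟨hqj, hGL, ?_⟩
    rw [hcast, ← hT2]
    funext m
    show Um * T1 m * Vm = T2 m
    rw [hmat m, Matrix.mul_assoc, hUV, Matrix.mul_one]
  exact hA.2.2.1 j i₀ (fun h => hi₀ h) hiso
end
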